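/- arXiv:2405.06355 — 11 statements merged into one kernel-verified Lean document; each statement's English description precedes it below -/
import Mathlib

section
/- Let η > 0 and let n < m be positive odd coprime integers. If y : [0,∞) → ℝ is differentiable and satisfies y'(t) = −η·sign(y(t))·|y(t)|^{n/m} for all t ≥ 0, then |y| is nonincreasing on [0,∞), and y(t) = 0 for all t ≥ t_s, where t_s = (m/(η·(m−n)))·|y(0)|^{(m−n)/m}. -/
open Real Set

/-!
Away from zero, `|y|^(1-p)` decreases at the constant rate `η(1-p)` along the flow
`y' = -η sign(y) |y|^p`, since its derivative is `(1-p)|y|^(-p) · (-η|y|^p)`. So if `y` had no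
zero on `[0, T]` with `T = |y 0|^(1-p) / (η(1-p))`, this power would drop from `|y 0|^(1-p)` to `0`
at time `T`, forcing `y T = 0`. Once `y` vanishes it stays zero, because `y · y' ≤ 0` makes `|y|`
nonincreasing.
-/

theorem Real.sign_eq_signType_sign (x : ℝ) : Real.sign x = (SignType.sign x : ℝ) := by
  rcases lt_trichotomy x 0 with hx | rfl | hx <;> simp [*, Real.sign_of_neg, Real.sign_of_pos]

theorem sign_mul_sign_of_ne_zero {α : Type*} [Ring α] [LinearOrder α] [IsStrictOrderedRing α]
    {x : α} (hx : x ≠ 0) : (SignType.sign x : α) * SignType.sign x = 1 := by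
  rcases hx.lt_or_gt with hx | hx <;> simp [hx]

theorem antitoneOn_abs_of_mul_deriv_nonpos {D : Set ℝ} (hD : Convex ℝ D) {y y' : ℝ → ℝ}
    (hy : ∀ t ∈ D, HasDerivAt y (y' t) t) (hyy' : ∀ t ∈ D, y t * y' t ≤ 0) :
    AntitoneOn (fun t => |y t|) D := by
  have hsq : AntitoneOn (fun t => y t ^ 2) D := by
    refine antitoneOn_of_hasDerivWithinAt_nonpos (f' := fun t => 2 * (y t * y' t)) hD
      (fun t ht => ((hy t ht).continuousAt.pow 2).continuousWithinAt) (fun t ht => ?_)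
      (fun t ht => by nlinarith [hyy' t (interior_subset ht)])
    refine (((hy t (interior_subset ht)).pow 2).congr_deriv ?_).hasDerivWithinAt
    push_cast
    ring
  exact fun a ha b hb hab => sq_le_sq.mp (hsq ha hb hab)

section FiniteTimeExtinction

variable {η p : ℝ} {y : ℝ → ℝ}

theorem antitoneOn_abs_of_hasDerivAt_neg_sign_mul_rpow (hη : 0 ≤ η)
    (hy : ∀ t, 0 ≤ t → HasDerivAt y (-η * (Real.sign (y t) * |y t| ^ p)) t) :
    AntitoneOn (fun t => |y t|) (Ici 0) := by
  refine antitoneOn_abs_of_mul_deriv_nonpos (convex_Ici 0) hy fun t _ => ?_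
  have hyy' : y t * (-η * (Real.sign (y t) * |y t| ^ p)) = -(η * (|y t| * |y t| ^ p)) := by
    rw [Real.sign_eq_signType_sign, ← self_mul_sign]
    ring
  rw [hyy']
  have : 0 ≤ |y t| ^ p := rpow_nonneg (abs_nonneg _) p
  exact neg_nonpos.mpr (by positivity)

theorem hasDerivAt_abs_rpow_one_sub_of_hasDerivAt_neg_sign_mul_rpow {x : ℝ} (hx : y x ≠ 0)
    (hy : HasDerivAt y (-η * (Real.sign (y x) * |y x| ^ p)) x) :
    HasDerivAt (fun t => |y t| ^ (1 - p)) (-(η * (1 - p))) x := by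
  have habs : HasDerivAt (fun t => |y t|) (-η * |y x| ^ p) x := by
    refine ((hasDerivAt_abs hx).comp x hy).congr_deriv ?_
    rw [Real.sign_eq_signType_sign]
    linear_combination (-η * |y x| ^ p) * sign_mul_sign_of_ne_zero hx
  refine ((hasDerivAt_rpow_const (Or.inl (abs_ne_zero.mpr hx))).comp x habs).congr_deriv ?_
  have hpow : |y x| ^ (1 - p - 1) * |y x| ^ p = 1 := by
    rw [← rpow_add (abs_pos.mpr hx), sub_sub_cancel_left, neg_add_cancel, rpow_zero]
  linear_combination (-(η * (1 - p))) * hpow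

theorem exists_zero_of_hasDerivAt_neg_sign_mul_rpow (hη : 0 < η) (hp : p < 1)
    (hy : ∀ t, 0 ≤ t → HasDerivAt y (-η * (Real.sign (y t) * |y t| ^ p)) t) :
    ∃ s ∈ Icc 0 (|y 0| ^ (1 - p) / (η * (1 - p))), y s = 0 := by
  set T := |y 0| ^ (1 - p) / (η * (1 - p))
  have hα : 0 < 1 - p := sub_pos.mpr hp
  have hT : 0 ≤ T := by positivity
  by_contra! hne
  set g : ℝ → ℝ := fun t => |y t| ^ (1 - p) + η * (1 - p) * t
  have hg : ContinuousOn g (Icc 0 T) := by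
    have hyc : ContinuousOn y (Icc 0 T) := fun t ht => (hy t ht.1).continuousAt.continuousWithinAt
    exact (hyc.abs.rpow_const fun _ _ => Or.inr hα.le).add (continuousOn_const.mul continuousOn_id)
  have hg' : ∀ t ∈ Ico 0 T, HasDerivWithinAt g 0 (Ici t) t := by
    intro t ht
    have := (hasDerivAt_abs_rpow_one_sub_of_hasDerivAt_neg_sign_mul_rpow
      (hne t ⟨ht.1, ht.2.le⟩) (hy t ht.1)).add ((hasDerivAt_id t).const_mul (η * (1 - p)))
    rw [mul_one, neg_add_cancel] at this
    exact this.hasDerivWithinAt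
  have hgT : g T = g 0 := constant_of_has_deriv_right_zero hg hg' T ⟨hT, le_rfl⟩
  have hηT : η * (1 - p) * T = |y 0| ^ (1 - p) := by
    simp only [T]
    field_simp
  have : 0 < |y T| ^ (1 - p) := rpow_pos_of_pos (abs_pos.mpr (hne T ⟨hT, le_rfl⟩)) _
  simp only [g, hηT, mul_zero, add_zero] at hgT
  linarith

theorem eq_zero_of_hasDerivAt_neg_sign_mul_rpow (hη : 0 < η) (hp : p < 1)
    (hy : ∀ t, 0 ≤ t → HasDerivAt y (-η * (Real.sign (y t) * |y t| ^ p)) t) {t : ℝ}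
    (ht : |y 0| ^ (1 - p) / (η * (1 - p)) ≤ t) : y t = 0 := by
  obtain ⟨s, hs, hys⟩ := exists_zero_of_hasDerivAt_neg_sign_mul_rpow hη hp hy
  have := antitoneOn_abs_of_hasDerivAt_neg_sign_mul_rpow hη.le hy hs.1 (hs.1.trans (hs.2.trans ht))
    (hs.2.trans ht)
  simpa [hys] using this

end FiniteTimeExtinction

theorem stmt0_general (η : ℝ) (hη : 0 < η) (n m : ℕ) (hnm : n < m)
    (y : ℝ → ℝ)
    (hy : ∀ t, 0 ≤ t → HasDerivAt y (-η * (Real.sign (y t) * |y t| ^ ((n : ℝ) / m))) t) :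
    AntitoneOn (fun t => |y t|) (Ici 0) ∧
      ∀ t, (m : ℝ) / (η * ((m : ℝ) - n)) * |y 0| ^ (((m : ℝ) - n) / m) ≤ t → y t = 0 := by
  have hm : (0 : ℝ) < m := by exact_mod_cast (Nat.zero_le n).trans_lt hnm
  have hp : (n : ℝ) / m < 1 := (div_lt_one hm).mpr (by exact_mod_cast hnm)
  have hexp : 1 - (n : ℝ) / m = ((m : ℝ) - n) / m := by field_simp
  refine ⟨antitoneOn_abs_of_hasDerivAt_neg_sign_mul_rpow hη.le hy, fun t ht => ?_⟩
  refine eq_zero_of_hasDerivAt_neg_sign_mul_rpow hη hp hy (le_of_eq_of_le ?_ ht)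
  rw [hexp]
  field_simp

/-- Scalar finite-time-convergence lemma underlying Proposition 1:
if `y' = -η·sign(y)·|y|^{n/m}` on `[0,∞)` (the real `m`-th root of `y^n`),
then `|y|` is nonincreasing and `y` vanishes after
`t_s = (m/(η(m-n)))·|y 0|^{(m-n)/m}`. -/
theorem stmt0 (η : ℝ) (hη : 0 < η) (n m : ℕ) (hn : 0 < n) (hnm : n < m)
    (hodd_n : Odd n) (hodd_m : Odd m) (hcop : Nat.Coprime n m)
    (y : ℝ → ℝ)
    (hy : ∀ t, 0 ≤ t → HasDerivAt y (-η * (Real.sign (y t) * |y t| ^ ((n : ℝ) / m))) t) :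
    AntitoneOn (fun t => |y t|) (Ici 0) ∧
      ∀ t, (m : ℝ) / (η * ((m : ℝ) - n)) * |y 0| ^ (((m : ℝ) - n) / m) ≤ t → y t = 0 :=
  stmt0_general η hη n m hnm y hy
end

section
/- (Proposition 1, Case 1.) Suppose d, χ, χ^p : [0,∞) → ℝ are differentiable, d'(t) = V_g·sin(χ(t) − χ^p(t)), and χ'(t) = α·(χ^c(t) − χ(t)). Define χ^d(t) = χ^p(t) − arctan(k₃·d(t)³) + π/2 and χ̃ = χ − χ^d, assume χ̃(0) > 0, and let the command be χ^c = χ + χ^p'/α − (1/α)·(3k₃·d²/(1 + (k₃·d³)²))·V_g·sin(χ − χ^p) − (η/α)·χ̃^{n/m}. Then χ̃ satisfies χ̃'(t) = −η·χ̃(t)^{n/m} for all t ≥ 0, χ̃ is monotonically nonincreasing, and χ̃(t) = 0 for all t ≥ t_s, where t_s = (m/(η·(m−n)))·χ̃(0)^{(m−n)/m}. -/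
/-!
The command `χ^c` is built to cancel the drift of `χ^d`, so the course error `e = χ - χ^d`
solves `e' = -η e^{p}` with `p = n/m < 1`. Since `e' > 0` wherever `e < 0`, the error never
becomes negative, hence it is nonincreasing; and while it is positive, `(e^{1-p})' = -η (1-p)`,
so it must vanish by the time `e(0)^{1-p} / (η (1-p))`.
-/

open Real Set

-- The paper's `x^{n/m}` for odd `n, m`, i.e. the odd extension of `x ↦ x ^ p` from `0 ≤ x`.
noncomputable def signedRpow (x p : ℝ) : ℝ := Real.sign x * |x| ^ p

lemma signedRpow_of_pos {x : ℝ} (hx : 0 < x) (p : ℝ) : signedRpow x p = x ^ p := by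
  rw [signedRpow, Real.sign_of_pos hx, abs_of_pos hx, one_mul]

lemma signedRpow_neg_of_neg {x : ℝ} (hx : x < 0) (p : ℝ) : signedRpow x p < 0 := by
  rw [signedRpow, Real.sign_of_neg hx, neg_one_mul, neg_lt_zero]
  exact rpow_pos_of_pos (abs_pos.mpr hx.ne) p

lemma signedRpow_nonneg {x : ℝ} (hx : 0 ≤ x) (p : ℝ) : 0 ≤ signedRpow x p := by
  rcases hx.eq_or_lt with rfl | hx
  · simp [signedRpow]
  · rw [signedRpow_of_pos hx]
    exact rpow_nonneg hx.le p

lemma antitoneOn_of_hasDerivAt_nonpos {D : Set ℝ} (hD : Convex ℝ D) {f f' : ℝ → ℝ}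
    (hf : ∀ x ∈ D, HasDerivAt f (f' x) x) (hf' : ∀ x ∈ interior D, f' x ≤ 0) :
    AntitoneOn f D :=
  antitoneOn_of_hasDerivWithinAt_nonpos hD
    (fun x hx => (hf x hx).continuousAt.continuousWithinAt)
    (fun x hx => (hf x (interior_subset hx)).hasDerivWithinAt) hf'

lemma nonneg_of_hasDerivAt_pos_of_neg {f f' : ℝ → ℝ} {a : ℝ}
    (hf : ∀ t, a ≤ t → HasDerivAt f (f' t) t) (hf' : ∀ t, a ≤ t → f t < 0 → 0 < f' t)
    (ha : 0 ≤ f a) {t : ℝ} (ht : a ≤ t) : 0 ≤ f t := by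
  by_contra! hneg
  have hcont : ContinuousOn f (Icc a t) :=
    fun x hx => (hf x hx.1).continuousAt.continuousWithinAt
  obtain ⟨s, ⟨⟨has, hst⟩, hfs⟩, hs_last⟩ : ∃ s, IsGreatest (Icc a t ∩ f ⁻¹' Ici 0) s :=
    (isCompact_Icc.of_isClosed_subset
      (hcont.preimage_isClosed_of_isClosed isClosed_Icc isClosed_Ici)
      inter_subset_left).exists_isGreatest ⟨a, ⟨le_rfl, ht⟩, ha⟩
  have hneg_after : ∀ x ∈ Ioc s t, f x < 0 := fun x hx => by
    by_contra! h
    exact (hs_last ⟨⟨has.trans hx.1.le, hx.2⟩, h⟩).not_gt hx.1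
  have hst : s < t := hst.lt_of_ne (by rintro rfl; exact hfs.not_gt hneg)
  have hmono : StrictMonoOn f (Icc s t) :=
    strictMonoOn_of_hasDerivWithinAt_pos (convex_Icc s t) (hcont.mono (Icc_subset_Icc_left has))
      (fun x hx => (hf x (has.trans (interior_subset hx).1)).hasDerivWithinAt)
      (fun x hx => by
        rw [interior_Icc] at hx
        exact hf' x (has.trans hx.1.le) (hneg_after x (Ioo_subset_Ioc_self hx)))
  exact (hmono ⟨le_rfl, hst.le⟩ ⟨hst.le, le_rfl⟩ hst).not_ge (hneg.le.trans hfs)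

section FiniteTimeStability

variable {f : ℝ → ℝ} {a η p : ℝ}

lemma nonneg_of_hasDerivAt_signedRpow (hη : 0 < η)
    (hf : ∀ t, a ≤ t → HasDerivAt f (-η * signedRpow (f t) p) t) (ha : 0 ≤ f a)
    {t : ℝ} (ht : a ≤ t) : 0 ≤ f t :=
  nonneg_of_hasDerivAt_pos_of_neg hf
    (fun s _ hs => by nlinarith [signedRpow_neg_of_neg hs p]) ha ht

lemma antitoneOn_of_hasDerivAt_signedRpow (hη : 0 < η)
    (hf : ∀ t, a ≤ t → HasDerivAt f (-η * signedRpow (f t) p) t) (ha : 0 ≤ f a) :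
    AntitoneOn f (Ici a) :=
  antitoneOn_of_hasDerivAt_nonpos (convex_Ici a) hf fun t ht => by
    rw [interior_Ici] at ht
    nlinarith [signedRpow_nonneg (nonneg_of_hasDerivAt_signedRpow hη hf ha ht.le) p]

lemma hasDerivAt_rpow_one_sub_of_signedRpow {t : ℝ} (hft : 0 < f t)
    (hf : HasDerivAt f (-η * signedRpow (f t) p) t) :
    HasDerivAt (fun s => f s ^ (1 - p)) (-(η * (1 - p))) t := by
  convert hf.rpow_const (p := 1 - p) (Or.inl hft.ne') using 1
  rw [signedRpow_of_pos hft, sub_sub_cancel_left, rpow_neg hft.le]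
  field_simp [(rpow_pos_of_pos hft p).ne']

lemma eq_zero_of_hasDerivAt_signedRpow (hη : 0 < η) (hp : p < 1)
    (hf : ∀ t, a ≤ t → HasDerivAt f (-η * signedRpow (f t) p) t) (ha : 0 ≤ f a)
    {t : ℝ} (ht : a + f a ^ (1 - p) / (η * (1 - p)) ≤ t) : f t = 0 := by
  have hp' : 0 < 1 - p := sub_pos.mpr hp
  have hat : a ≤ t := le_trans (le_add_of_nonneg_right (by positivity)) ht
  refine le_antisymm ?_ (nonneg_of_hasDerivAt_signedRpow hη hf ha hat)
  by_contra! hpos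
  have hpos_on : ∀ s ∈ Icc a t, 0 < f s := fun s hs =>
    hpos.trans_le (antitoneOn_of_hasDerivAt_signedRpow hη hf ha hs.1 hat hs.2)
  have hdecay : AntitoneOn (fun s => f s ^ (1 - p) + η * (1 - p) * s) (Icc a t) :=
    antitoneOn_of_hasDerivAt_nonpos (f' := 0) (convex_Icc a t) (fun s hs => by
      simpa using (hasDerivAt_rpow_one_sub_of_signedRpow (hpos_on s hs) (hf s hs.1)).fun_add
        ((hasDerivAt_id' s).const_mul (η * (1 - p)))) fun _ _ => le_rfl
  have hdecay_at := hdecay ⟨le_rfl, hat⟩ ⟨hat, le_rfl⟩ hat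
  have hft : 0 < f t ^ (1 - p) := rpow_pos_of_pos hpos _
  rw [← le_sub_iff_add_le', div_le_iff₀ (by positivity)] at ht
  simp only at hdecay_at
  linarith

end FiniteTimeStability

theorem stmt2_general (Vg α k₃ η : ℝ) (hα : 0 < α) (hη : 0 < η)
    (n m : ℕ) (hnm : n < m)
    (d χ χp χp' χc χd : ℝ → ℝ)
    (hd : ∀ t, 0 ≤ t → HasDerivAt d (Vg * Real.sin (χ t - χp t)) t)
    (hχp : ∀ t, 0 ≤ t → HasDerivAt χp (χp' t) t)
    (hχ : ∀ t, 0 ≤ t → HasDerivAt χ (α * (χc t - χ t)) t)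
    (hχd : χd = fun t => χp t - Real.arctan (k₃ * d t ^ 3) + π / 2)
    (h0 : 0 < χ 0 - χd 0)
    (hχc : χc = fun t => χ t + χp' t / α
        - (1 / α) * (3 * k₃ * d t ^ 2 / (1 + (k₃ * d t ^ 3) ^ 2)) * Vg * Real.sin (χ t - χp t)
        - (η / α) * (Real.sign (χ t - χd t) * |χ t - χd t| ^ ((n : ℝ) / m))) :
    (∀ t, 0 ≤ t → HasDerivAt (fun s => χ s - χd s)
        (-η * (Real.sign (χ t - χd t) * |χ t - χd t| ^ ((n : ℝ) / m))) t) ∧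
      AntitoneOn (fun t => χ t - χd t) (Ici 0) ∧
      ∀ t, (m : ℝ) / (η * ((m : ℝ) - n)) * (χ 0 - χd 0) ^ (((m : ℝ) - n) / m) ≤ t →
        χ t - χd t = 0 := by
  have hm : (0 : ℝ) < m := by exact_mod_cast (Nat.zero_le n).trans_lt hnm
  have hp : (n : ℝ) / m < 1 := (div_lt_one hm).2 (by exact_mod_cast hnm)
  have hder : ∀ t, 0 ≤ t →
      HasDerivAt (fun s => χ s - χd s) (-η * signedRpow (χ t - χd t) ((n : ℝ) / m)) t := by
    intro t ht
    have harctan := (((hd t ht).fun_pow 3).const_mul k₃).arctan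
    subst hχd hχc
    refine ((hχ t ht).fun_sub (((hχp t ht).fun_sub harctan).add_const (π / 2))).congr_deriv ?_
    simp only [signedRpow, Nat.cast_ofNat, Nat.add_one_sub_one]
    field_simp
    ring
  refine ⟨hder, antitoneOn_of_hasDerivAt_signedRpow hη hder h0.le, fun t ht => ?_⟩
  refine eq_zero_of_hasDerivAt_signedRpow hη hp hder h0.le (le_of_eq_of_le ?_ ht)
  rw [zero_add, show ((m : ℝ) - n) / m = 1 - n / m by field_simp]
  field_simp

/-- Proposition 1 (Case 1 of the switched vector field, side ρ = +1):
with `χ^d = χ^p - arctan(k₃ d³) + π/2`, `χ̃ = χ - χ^d`, `χ̃(0) > 0`, and the stated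
command `χ^c`, the course error obeys `χ̃' = -η·χ̃^{n/m}`, is nonincreasing, and
vanishes after `t_s = (m/(η(m-n)))·χ̃(0)^{(m-n)/m}`. -/
theorem stmt2 (Vg α k₃ η : ℝ) (hVg : 0 < Vg) (hα : 0 < α) (hk₃ : 0 < k₃) (hη : 0 < η)
    (n m : ℕ) (hn : 0 < n) (hnm : n < m) (hodd_n : Odd n) (hodd_m : Odd m)
    (hcop : Nat.Coprime n m)
    (d χ χp χp' χc χd : ℝ → ℝ)
    (hd : ∀ t, 0 ≤ t → HasDerivAt d (Vg * Real.sin (χ t - χp t)) t)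
    (hχp : ∀ t, 0 ≤ t → HasDerivAt χp (χp' t) t)
    (hχ : ∀ t, 0 ≤ t → HasDerivAt χ (α * (χc t - χ t)) t)
    (hχd : χd = fun t => χp t - Real.arctan (k₃ * d t ^ 3) + π / 2)
    (h0 : 0 < χ 0 - χd 0)
    (hχc : χc = fun t => χ t + χp' t / α
        - (1 / α) * (3 * k₃ * d t ^ 2 / (1 + (k₃ * d t ^ 3) ^ 2)) * Vg * Real.sin (χ t - χp t)
        - (η / α) * (Real.sign (χ t - χd t) * |χ t - χd t| ^ ((n : ℝ) / m))) :
    (∀ t, 0 ≤ t → HasDerivAt (fun s => χ s - χd s)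
        (-η * (Real.sign (χ t - χd t) * |χ t - χd t| ^ ((n : ℝ) / m))) t) ∧
      AntitoneOn (fun t => χ t - χd t) (Ici 0) ∧
      ∀ t, (m : ℝ) / (η * ((m : ℝ) - n)) * (χ 0 - χd 0) ^ (((m : ℝ) - n) / m) ≤ t →
        χ t - χd t = 0 :=
  stmt2_general Vg α k₃ η hα hη n m hnm d χ χp χp' χc χd hd hχp hχ hχd h0 hχc
end

section
/- Let σ > 0 and let y : [0,∞) → ℝ be continuous, differentiable at every t with y(t) ≠ 0, and satisfy y'(t) = −σ·sign(y(t))/(1 + |y(t)|) at every such t. Set t* = (|y(0)| + y(0)²/2)/σ. Then |y| is nonincreasing on [0,∞), y(t) ≠ 0 for all 0 ≤ t < t* (provided y(0) ≠ 0), and y(t) = 0 for all t ≥ t*. -/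
/-!
Wherever `y ≠ 0`, the quantity `V = |y| + y²/2` has derivative `-σ`, so by the mean value
theorem `V` decreases at rate `σ` on every interval free of zeros of `y`. Since `V ≥ 0`, a zero
of `y` is never left: after the last zero before a time with `y ≠ 0`, `V` would have to become
negative. Hence `V t = max (V 0 - σ t) 0`, and all three claims are read off this formula,
`|y|` being an increasing function of `V`.
-/

open Real Set

noncomputable def absAddHalfSq (x : ℝ) : ℝ := |x| + x ^ 2 / 2

theorem absAddHalfSq_nonneg (x : ℝ) : 0 ≤ absAddHalfSq x := by
  unfold absAddHalfSq; positivity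

theorem absAddHalfSq_eq_zero_iff {x : ℝ} : absAddHalfSq x = 0 ↔ x = 0 := by
  refine ⟨fun h => ?_, fun h => by simp [absAddHalfSq, h]⟩
  unfold absAddHalfSq at h
  exact abs_eq_zero.mp (by nlinarith [abs_nonneg x, sq_nonneg x])

theorem abs_le_abs_of_absAddHalfSq_le {x y : ℝ} (h : absAddHalfSq x ≤ absAddHalfSq y) :
    |x| ≤ |y| := by
  unfold absAddHalfSq at h
  nlinarith [abs_nonneg x, abs_nonneg y, sq_abs x, sq_abs y]

theorem continuous_absAddHalfSq : Continuous absAddHalfSq := by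
  unfold absAddHalfSq; fun_prop

theorem hasDerivAt_absAddHalfSq_comp {y : ℝ → ℝ} {σ t : ℝ} (ht : y t ≠ 0)
    (hy : HasDerivAt y (-σ * Real.sign (y t) / (1 + |y t|)) t) :
    HasDerivAt (fun u => absAddHalfSq (y u)) (-σ) t := by
  have hsq := (hy.pow 2).div_const 2
  rcases ht.lt_or_gt with h | h
  · have hne : 1 + -y t ≠ 0 := by linarith
    refine (((hasDerivAt_abs_neg h).comp t hy).add hsq).congr_deriv ?_
    rw [Real.sign_of_neg h, abs_of_neg h]
    field_simp
    ring
  · have hne : 1 + y t ≠ 0 := by linarith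
    refine (((hasDerivAt_abs_pos h).comp t hy).add hsq).congr_deriv ?_
    rw [Real.sign_of_pos h, abs_of_pos h]
    field_simp
    ring

section LinearDecay

variable {f : ℝ → ℝ} {σ a b : ℝ}

theorem isCompact_Icc_inter_preimage_zero (hf : ContinuousOn f (Icc a b)) :
    IsCompact (Icc a b ∩ f ⁻¹' {0}) :=
  isCompact_Icc.of_isClosed_subset
    (hf.preimage_isClosed_of_isClosed isClosed_Icc isClosed_singleton) inter_subset_left

theorem eq_sub_mul_of_hasDerivAt_const (hab : a ≤ b) (hf : ContinuousOn f (Icc a b))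
    (hderiv : ∀ t ∈ Ioo a b, HasDerivAt f (-σ) t) : f b = f a - σ * (b - a) := by
  rcases hab.eq_or_lt with rfl | hlt
  · simp
  obtain ⟨c, -, hc⟩ := exists_hasDerivAt_eq_slope f (fun _ => -σ) hlt hf hderiv
  rw [eq_div_iff (sub_ne_zero.2 hlt.ne')] at hc
  linarith

theorem eq_zero_of_hasDerivAt_neg_of_eq_zero (hσ : 0 < σ) (hab : a ≤ b)
    (hf : ContinuousOn f (Icc a b)) (hb : 0 ≤ f b)
    (hderiv : ∀ t ∈ Ioo a b, f t ≠ 0 → HasDerivAt f (-σ) t) (ha : f a = 0) : f b = 0 := by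
  by_contra hfb
  obtain ⟨s, ⟨hs, hfs⟩, hlast⟩ :=
    (isCompact_Icc_inter_preimage_zero hf).exists_isGreatest ⟨a, ⟨le_rfl, hab⟩, ha⟩
  have hsb : s < b := hs.2.lt_of_ne (by rintro rfl; exact hfb hfs)
  have hne : ∀ t ∈ Ioo s b, f t ≠ 0 := fun t ht hft =>
    ht.1.not_ge (hlast ⟨⟨hs.1.trans ht.1.le, ht.2.le⟩, hft⟩)
  have hdecay := eq_sub_mul_of_hasDerivAt_const hsb.le (hf.mono (Icc_subset_Icc_left hs.1))
    fun t ht => hderiv t ⟨hs.1.trans_lt ht.1, ht.2⟩ (hne t ht)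
  rw [show f s = 0 from hfs] at hdecay
  nlinarith

theorem eq_max_sub_mul_of_hasDerivAt_neg (hσ : 0 < σ) (hf : ContinuousOn f (Ici a))
    (hf_nonneg : ∀ t ∈ Ici a, 0 ≤ f t)
    (hderiv : ∀ t ∈ Ioi a, f t ≠ 0 → HasDerivAt f (-σ) t) {t : ℝ} (ht : a ≤ t) :
    f t = max (f a - σ * (t - a)) 0 := by
  have hf' : ∀ {b}, ContinuousOn f (Icc a b) := hf.mono Icc_subset_Ici_self
  by_cases hft : f t = 0
  · obtain ⟨s, ⟨hs, hfs⟩, hfirst⟩ :=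
      (isCompact_Icc_inter_preimage_zero hf').exists_isLeast ⟨t, ⟨ht, le_rfl⟩, hft⟩
    have hdecay := eq_sub_mul_of_hasDerivAt_const hs.1 hf' fun u hu =>
      hderiv u hu.1 fun hfu => hu.2.not_ge (hfirst ⟨⟨hu.1.le, hu.2.le.trans hs.2⟩, hfu⟩)
    rw [show f s = 0 from hfs] at hdecay
    rw [hft, max_eq_right]
    nlinarith [hs.2]
  · have hne : ∀ u ∈ Icc a t, f u ≠ 0 := fun u hu hfu =>
      hft (eq_zero_of_hasDerivAt_neg_of_eq_zero hσ hu.2 (hf.mono fun v hv => hu.1.trans hv.1)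
        (hf_nonneg t ht) (fun v hv => hderiv v (hu.1.trans_lt hv.1)) hfu)
    have hdecay := eq_sub_mul_of_hasDerivAt_const ht hf' fun u hu =>
      hderiv u hu.1 (hne u (Ioo_subset_Icc_self hu))
    rw [← hdecay, max_eq_left (hf_nonneg t ht)]

end LinearDecay

/-- Scalar finite-time sliding-mode convergence lemma underlying Proposition 2:
if `y' = -σ·sign(y)/(1 + |y|)` wherever `y ≠ 0`, then `|y|` is nonincreasing,
`y` stays away from zero before `t* = (|y 0| + y 0²/2)/σ` (when `y 0 ≠ 0`),
and `y` vanishes from `t*` onwards. -/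
theorem stmt4 (σ : ℝ) (hσ : 0 < σ) (y : ℝ → ℝ)
    (hcont : ContinuousOn y (Ici 0))
    (hy : ∀ t, 0 ≤ t → y t ≠ 0 →
      HasDerivAt y (-σ * Real.sign (y t) / (1 + |y t|)) t)
    (tstar : ℝ) (htstar : tstar = (|y 0| + y 0 ^ 2 / 2) / σ) :
    AntitoneOn (fun t => |y t|) (Ici 0) ∧
      (y 0 ≠ 0 → ∀ t, 0 ≤ t → t < tstar → y t ≠ 0) ∧
      ∀ t, tstar ≤ t → y t = 0 := by
  have hV : ∀ t, 0 ≤ t → absAddHalfSq (y t) = max (absAddHalfSq (y 0) - σ * t) 0 := by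
    intro t ht
    simpa using eq_max_sub_mul_of_hasDerivAt_neg (f := fun u => absAddHalfSq (y u)) hσ
      (continuous_absAddHalfSq.comp_continuousOn hcont) (fun u _ => absAddHalfSq_nonneg _)
      (fun u hu hne =>
        have hyu : y u ≠ 0 := absAddHalfSq_eq_zero_iff.not.1 hne
        hasDerivAt_absAddHalfSq_comp hyu (hy u hu.le hyu)) ht
  have hV0 : absAddHalfSq (y 0) = σ * tstar := by
    rw [htstar, absAddHalfSq]
    field_simp
  refine ⟨fun a ha b hb hab => abs_le_abs_of_absAddHalfSq_le ?_, fun _ t ht htt => ?_,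
    fun t htt => ?_⟩
  · rw [hV a ha, hV b hb]
    gcongr
  · rw [Ne, ← absAddHalfSq_eq_zero_iff, hV t ht]
    exact (lt_max_of_lt_left (by nlinarith)).ne'
  · have htstar_nonneg : 0 ≤ tstar := htstar ▸ by positivity
    rw [← absAddHalfSq_eq_zero_iff, hV t (htstar_nonneg.trans htt), max_eq_right]
    nlinarith
end

section
/- (Proposition 2, Case 2.) Suppose d, χ, χ^p : [0,∞) → ℝ with χ continuous, d and χ^p differentiable, d'(t) = V_g·sin(χ(t) − χ^p(t)), and χ'(t) = α·(χ^c(t) − χ(t)) wherever χ is differentiable. Define χ^d(t) = χ^p(t) − arctan(k₃·d(t)³) and χ̃ = χ − χ^d, and let the command be χ^c = χ + χ^p'/α − (1/α)·(3k₃·d²/(1 + (k₃·d³)²))·V_g·sin(χ − χ^p) − (β/α)·sign(χ̃) with β = σ/(1 + |χ̃|), σ > 0. Then at every t with χ̃(t) ≠ 0 one has χ̃'(t) = −σ·sign(χ̃(t))/(1 + |χ̃(t)|); consequently |χ̃| is monotonically nonincreasing and χ̃(t) = 0 for all t ≥ (|χ̃(0)| + χ̃(0)²/2)/σ. -/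
open Real Set

/-!
The command `χ^c` is built so that `α (χ^c - χ)` cancels the derivative of `χ^d` exactly,
leaving `χ̃' = -σ sign χ̃ / (1 + |χ̃|)`. Along such a solution the Lyapunov function
`V = |χ̃| + χ̃² / 2` satisfies `V' = sign χ̃ (1 + |χ̃|) χ̃' = -σ` wherever `χ̃ ≠ 0`, so by the mean
value theorem `V` drops at rate exactly `σ` between zeros of `χ̃`. Hence `χ̃` stays at `0` once it
gets there, `|χ̃|` is nonincreasing, and `χ̃` must vanish before time `V(0) / σ`.
-/

structure IsSlidingModeSolution (σ : ℝ) (s : Set ℝ) (e : ℝ → ℝ) : Prop where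
  continuousOn : ContinuousOn e s
  hasDerivAt : ∀ t ∈ s, e t ≠ 0 → HasDerivAt e (-σ * Real.sign (e t) / (1 + |e t|)) t

lemma hasDerivAt_abs_add_sq_half {σ x : ℝ} {e : ℝ → ℝ} (hx : e x ≠ 0)
    (he : HasDerivAt e (-σ * Real.sign (e x) / (1 + |e x|)) x) :
    HasDerivAt (fun t => |e t| + e t ^ 2 / 2) (-σ) x := by
  have habs : HasDerivAt (fun t => |e t|) _ x := (hasDerivAt_abs hx).comp x he
  refine (habs.add ((he.pow 2).div_const 2)).congr_deriv ?_
  rcases hx.lt_or_gt with hneg | hpos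
  · have : 1 + -e x ≠ 0 := by linarith
    simp only [Real.sign_of_neg hneg, _root_.sign_neg hneg, abs_of_neg hneg, SignType.coe_neg_one]
    field_simp
    ring
  · have : 1 + e x ≠ 0 := by linarith
    simp only [Real.sign_of_pos hpos, _root_.sign_pos hpos, abs_of_pos hpos, SignType.coe_one]
    field_simp
    ring

namespace IsSlidingModeSolution

variable {σ : ℝ} {s : Set ℝ} {e : ℝ → ℝ} [s.OrdConnected]

theorem abs_add_sq_half_eq (h : IsSlidingModeSolution σ s e) {a b : ℝ} (ha : a ∈ s)
    (hb : b ∈ s) (hab : a ≤ b) (hne : ∀ x ∈ Ioo a b, e x ≠ 0) :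
    |e b| + e b ^ 2 / 2 = |e a| + e a ^ 2 / 2 - σ * (b - a) := by
  rcases hab.eq_or_lt with rfl | hlt
  · ring
  have hsub : Icc a b ⊆ s := Set.Icc_subset s ha hb
  have hcont := h.continuousOn.mono hsub
  obtain ⟨c, -, hslope⟩ := exists_hasDerivAt_eq_slope (fun t => |e t| + e t ^ 2 / 2)
    (fun _ => -σ) hlt (hcont.abs.add ((hcont.pow 2).div_const 2)) fun x hx =>
      hasDerivAt_abs_add_sq_half (hne x hx)
        (h.hasDerivAt x (hsub (Ioo_subset_Icc_self hx)) (hne x hx))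
  rw [eq_div_iff (sub_ne_zero.2 hlt.ne')] at hslope
  linarith

theorem eq_zero_of_le_of_eq_zero (h : IsSlidingModeSolution σ s e) (hσ : 0 ≤ σ) {a b : ℝ}
    (ha : a ∈ s) (hb : b ∈ s) (hab : a ≤ b) (hea : e a = 0) : e b = 0 := by
  by_contra heb
  have hzeros : IsCompact (Icc a b ∩ e ⁻¹' {0}) :=
    isCompact_Icc.of_isClosed_subset
      ((h.continuousOn.mono (Set.Icc_subset s ha hb)).preimage_isClosed_of_isClosed
        isClosed_Icc isClosed_singleton) inter_subset_left
  obtain ⟨c, ⟨hc, hec⟩, hlast⟩ := hzeros.exists_isGreatest ⟨a, ⟨left_mem_Icc.2 hab, hea⟩⟩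
  have hcb : c < b := hc.2.lt_of_ne fun hcb => heb (hcb ▸ hec)
  have hdec := h.abs_add_sq_half_eq (Set.Icc_subset s ha hb hc) hb hcb.le
    fun x hx hex => hx.1.not_ge (hlast ⟨⟨hc.1.trans hx.1.le, hx.2.le⟩, hex⟩)
  rw [mem_preimage, mem_singleton_iff] at hec
  rw [hec, abs_zero] at hdec
  nlinarith [abs_pos.2 heb, sq_nonneg (e b), mul_le_mul_of_nonneg_left hcb.le hσ]

theorem antitoneOn_abs (h : IsSlidingModeSolution σ s e) (hσ : 0 ≤ σ) :
    AntitoneOn (fun t => |e t|) s := by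
  intro a ha b hb hab
  by_cases hzero : ∃ c ∈ Icc a b, e c = 0
  · obtain ⟨c, hc, hec⟩ := hzero
    simp only [h.eq_zero_of_le_of_eq_zero hσ (Set.Icc_subset s ha hb hc) hb hc.2 hec, abs_zero,
      abs_nonneg]
  · push Not at hzero
    have := h.abs_add_sq_half_eq ha hb hab fun x hx => hzero x (Ioo_subset_Icc_self hx)
    nlinarith [abs_nonneg (e a), abs_nonneg (e b), sq_abs (e a), sq_abs (e b),
      mul_le_mul_of_nonneg_left hab hσ]

theorem eq_zero_of_add_abs_add_sq_half_div_le (h : IsSlidingModeSolution σ s e) (hσ : 0 < σ)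
    {t₀ t : ℝ} (ht₀ : t₀ ∈ s) (ht : t ∈ s)
    (hreach : t₀ + (|e t₀| + e t₀ ^ 2 / 2) / σ ≤ t) : e t = 0 := by
  by_contra het
  have hV : |e t₀| + e t₀ ^ 2 / 2 ≤ σ * (t - t₀) := by
    rw [← div_le_iff₀' hσ]
    linarith
  have hle : t₀ ≤ t := by nlinarith [abs_nonneg (e t₀), sq_nonneg (e t₀)]
  have hdec := h.abs_add_sq_half_eq ht₀ ht hle fun x hx hex => het
    (h.eq_zero_of_le_of_eq_zero hσ.le (Set.Icc_subset s ht₀ ht (Ioo_subset_Icc_self hx)) ht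
      hx.2.le hex)
  nlinarith [abs_pos.2 het, sq_nonneg (e t)]

end IsSlidingModeSolution

theorem stmt5_general (Vg α k₃ σ : ℝ) (hα : 0 < α) (hσ : 0 < σ)
    (d χ χp χp' χc χd : ℝ → ℝ)
    (hχcont : ContinuousOn χ (Ici 0))
    (hd : ∀ t, 0 ≤ t → HasDerivAt d (Vg * Real.sin (χ t - χp t)) t)
    (hχp : ∀ t, 0 ≤ t → HasDerivAt χp (χp' t) t)
    (hχd : χd = fun t => χp t - Real.arctan (k₃ * d t ^ 3))
    (hχ : ∀ t, 0 ≤ t → χ t - χd t ≠ 0 → HasDerivAt χ (α * (χc t - χ t)) t)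
    (hχc : χc = fun t => χ t + χp' t / α
        - (1 / α) * (3 * k₃ * d t ^ 2 / (1 + (k₃ * d t ^ 3) ^ 2)) * Vg * Real.sin (χ t - χp t)
        - (σ / (1 + |χ t - χd t|) / α) * Real.sign (χ t - χd t)) :
    (∀ t, 0 ≤ t → χ t - χd t ≠ 0 →
      HasDerivAt (fun s => χ s - χd s)
        (-σ * Real.sign (χ t - χd t) / (1 + |χ t - χd t|)) t) ∧
      AntitoneOn (fun t => |χ t - χd t|) (Ici 0) ∧
      ∀ t, (|χ 0 - χd 0| + (χ 0 - χd 0) ^ 2 / 2) / σ ≤ t → χ t - χd t = 0 := by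
  have hsol : IsSlidingModeSolution σ (Ici 0) fun s => χ s - χd s := by
    subst hχd hχc
    constructor
    · have hdc : ContinuousOn d (Ici 0) := fun t ht =>
        (hd t ht).continuousAt.continuousWithinAt
      have hpc : ContinuousOn χp (Ici 0) := fun t ht =>
        (hχp t ht).continuousAt.continuousWithinAt
      exact hχcont.sub (hpc.sub (continuous_arctan.comp_continuousOn
        (continuousOn_const.mul (hdc.pow 3))))
    · intro t ht hne
      refine ((hχ t ht hne).sub
        ((hχp t ht).sub (((hd t ht).pow 3).const_mul k₃).arctan)).congr_deriv ?_
      simp only [Pi.pow_apply]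
      field_simp
      ring
  refine ⟨hsol.hasDerivAt, hsol.antitoneOn_abs hσ.le, fun t hreach => ?_⟩
  have ht : 0 ≤ t := le_trans (by positivity) hreach
  exact hsol.eq_zero_of_add_abs_add_sq_half_div_le hσ self_mem_Ici ht (by rwa [zero_add])

/-- Proposition 2 (Case 2 of the switched vector field): with
`χ^d = χ^p - arctan(k₃ d³)`, `χ̃ = χ - χ^d` and the sliding-mode command `χ^c`
(with `β = σ/(1 + |χ̃|)`), the course error obeys
`χ̃' = -σ·sign(χ̃)/(1 + |χ̃|)` off the sliding surface,
`|χ̃|` is nonincreasing, and `χ̃` vanishes after `(|χ̃(0)| + χ̃(0)²/2)/σ`. -/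
theorem stmt5 (Vg α k₃ σ : ℝ) (hVg : 0 < Vg) (hα : 0 < α) (hk₃ : 0 < k₃) (hσ : 0 < σ)
    (d χ χp χp' χc χd : ℝ → ℝ)
    (hχcont : ContinuousOn χ (Ici 0))
    (hd : ∀ t, 0 ≤ t → HasDerivAt d (Vg * Real.sin (χ t - χp t)) t)
    (hχp : ∀ t, 0 ≤ t → HasDerivAt χp (χp' t) t)
    (hχd : χd = fun t => χp t - Real.arctan (k₃ * d t ^ 3))
    (hχ : ∀ t, 0 ≤ t → χ t - χd t ≠ 0 → HasDerivAt χ (α * (χc t - χ t)) t)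
    (hχc : χc = fun t => χ t + χp' t / α
        - (1 / α) * (3 * k₃ * d t ^ 2 / (1 + (k₃ * d t ^ 3) ^ 2)) * Vg * Real.sin (χ t - χp t)
        - (σ / (1 + |χ t - χd t|) / α) * Real.sign (χ t - χd t)) :
    (∀ t, 0 ≤ t → χ t - χd t ≠ 0 →
      HasDerivAt (fun s => χ s - χd s)
        (-σ * Real.sign (χ t - χd t) / (1 + |χ t - χd t|)) t) ∧
      AntitoneOn (fun t => |χ t - χd t|) (Ici 0) ∧
      ∀ t, (|χ 0 - χd 0| + (χ 0 - χd 0) ^ 2 / 2) / σ ≤ t → χ t - χd t = 0 :=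
  stmt5_general Vg α k₃ σ hα hσ d χ χp χp' χc χd hχcont hd hχp hχd hχ hχc
end

section
/- (Proposition 3.) Let V_g > 0, k₃ > 0, and d_s > 0. Suppose d : [0,∞) → ℝ is differentiable with d'(t) = −V_g·k₃·d(t)³/√(1 + (k₃·d(t)³)²) for all t (this is the cross-track dynamics when the course equals the desired course χ^d(d) = χ^p − arctan(k₃·d³), since sin(arctan x) = x/√(1+x²)). If d(0) > d_s, then as long as d(t) ≥ d_s one has d'(t) ≤ −V_g·k₃·d_s³/√(1 + (k₃·d_s³)²) < 0, and there exists a time t₁ ≤ (d(0) − d_s)·√(1 + (k₃·d_s³)²)/(V_g·k₃·d_s³) with d(t₁) = d_s; in particular |d| is strictly decreasing and reaches the switching threshold d_s in finite time. -/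
open Real Set

/-! Since `sin (arctan x) = x / √(1 + x²)` is increasing, the decrease rate `-d'` is at least its
value at `d_s` as long as `d ≥ d_s`, so `d` falls below `d_s` within time `(d(0) - d_s) / rate`.
To see that `d` stays positive, read the dynamics as a linear equation `d' = a(t) d` with continuous
coefficient `a(t) = -V_g k₃ d(t)² / √(1 + (k₃ d(t)³)²)`; then `d(t) = d(0) exp ∫₀ᵗ a`. -/

theorem strictMono_div_sqrt_one_add_sq : StrictMono fun x : ℝ => x / √(1 + x ^ 2) := by
  simpa only [sin_arctan] using sin_arctan_strictMono

theorem mul_pow_three_div_sqrt_le {V k x y : ℝ} (hV : 0 ≤ V) (hk : 0 ≤ k) (hx : 0 ≤ x)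
    (hxy : x ≤ y) :
    V * k * x ^ 3 / √(1 + (k * x ^ 3) ^ 2) ≤ V * k * y ^ 3 / √(1 + (k * y ^ 3) ^ 2) := by
  have hfactor : ∀ z, V * k * z ^ 3 / √(1 + (k * z ^ 3) ^ 2)
      = V * (k * z ^ 3 / √(1 + (k * z ^ 3) ^ 2)) := fun z => by ring
  rw [hfactor, hfactor]
  exact mul_le_mul_of_nonneg_left (strictMono_div_sqrt_one_add_sq.monotone (by gcongr)) hV

theorem eq_mul_exp_integral_of_hasDerivAt {a d : ℝ → ℝ} (ha : Continuous a)
    (hd : ∀ t, HasDerivAt d (a t * d t) t) (t : ℝ) :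
    d t = d 0 * exp (∫ s in (0 : ℝ)..t, a s) := by
  set A : ℝ → ℝ := fun t => ∫ s in (0 : ℝ)..t, a s
  have hA : ∀ s, HasDerivAt A (a s) s := fun s => (ha.integral_hasStrictDerivAt 0 s).hasDerivAt
  have hg : ∀ s, HasDerivAt (fun s => d s * exp (-A s)) 0 s := fun s =>
    ((hd s).fun_mul (hA s).fun_neg.exp).congr_deriv (by ring)
  have hconst := is_const_of_deriv_eq_zero (fun s => (hg s).differentiableAt)
    (fun s => (hg s).deriv) t 0
  simp only [A, intervalIntegral.integral_same, neg_zero, exp_zero, mul_one] at hconst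
  rw [← hconst, mul_assoc, ← exp_add, neg_add_cancel, exp_zero, mul_one]

theorem exists_eq_of_deriv_le_neg {f : ℝ → ℝ} {c y : ℝ} (hf : Differentiable ℝ f) (hc : 0 < c)
    (hy : y ≤ f 0) (hderiv : ∀ t, y ≤ f t → deriv f t ≤ -c) :
    ∃ t ∈ Icc 0 ((f 0 - y) / c), f t = y := by
  set T := (f 0 - y) / c
  have hT : 0 ≤ T := div_nonneg (sub_nonneg.2 hy) hc.le
  obtain ⟨s, hs, hfs⟩ : ∃ s ∈ Icc 0 T, f s ≤ y := by
    by_contra! hgt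
    have hdrop := (convex_Icc 0 T).image_sub_le_mul_sub_of_deriv_le hf.continuous.continuousOn
      hf.differentiableOn (fun t ht => hderiv t (hgt t (interior_subset ht)).le)
      0 (left_mem_Icc.2 hT) T (right_mem_Icc.2 hT) hT
    have hcT : c * T = f 0 - y := mul_div_cancel₀ _ hc.ne'
    linarith [hgt T (right_mem_Icc.2 hT)]
  obtain ⟨t, ht, hft⟩ := intermediate_value_Icc' hs.1 hf.continuous.continuousOn ⟨hfs, hy⟩
  exact ⟨t, ⟨ht.1, ht.2.trans hs.2⟩, hft⟩

/-- Proposition 3: on the sliding surface of the cubic branch,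
`d' = -V_g·k₃·d³/√(1 + (k₃ d³)²)`; if `d(0) > d_s`, then while `d ≥ d_s` the
decrease rate is bounded away from zero, `d` reaches the switching threshold `d_s`
within time `(d(0) - d_s)·√(1 + (k₃ d_s³)²)/(V_g k₃ d_s³)`, and `|d|` is
strictly decreasing. -/
theorem stmt6 (Vg k₃ ds : ℝ) (hVg : 0 < Vg) (hk₃ : 0 < k₃) (hds : 0 < ds)
    (d : ℝ → ℝ)
    (hd : ∀ t, HasDerivAt d (-(Vg * k₃ * d t ^ 3 / Real.sqrt (1 + (k₃ * d t ^ 3) ^ 2))) t)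
    (h0 : ds < d 0) :
    (∀ t, 0 ≤ t → ds ≤ d t →
        deriv d t ≤ -(Vg * k₃ * ds ^ 3 / Real.sqrt (1 + (k₃ * ds ^ 3) ^ 2))) ∧
      -(Vg * k₃ * ds ^ 3 / Real.sqrt (1 + (k₃ * ds ^ 3) ^ 2)) < 0 ∧
      (∃ t₁, 0 ≤ t₁ ∧
        t₁ ≤ (d 0 - ds) * Real.sqrt (1 + (k₃ * ds ^ 3) ^ 2) / (Vg * k₃ * ds ^ 3) ∧
        d t₁ = ds) ∧
      StrictAntiOn (fun t => |d t|) (Ici 0) := by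
  set c := Vg * k₃ * ds ^ 3 / √(1 + (k₃ * ds ^ 3) ^ 2)
  have hc : 0 < c := by positivity
  have hdiff : Differentiable ℝ d := fun t => (hd t).differentiableAt
  have hrate : ∀ t, ds ≤ d t → deriv d t ≤ -c := fun t ht => by
    rw [(hd t).deriv, neg_le_neg_iff]
    exact mul_pow_three_div_sqrt_le hVg.le hk₃.le hds.le ht
  have hcont : Continuous d := hdiff.continuous
  have hpos : ∀ t, 0 < d t := fun t => by
    have hcoeff : Continuous fun t => -(Vg * k₃ * d t ^ 2 / √(1 + (k₃ * d t ^ 3) ^ 2)) :=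
      (Continuous.div (by fun_prop) (by fun_prop) fun t => by positivity).neg
    rw [eq_mul_exp_integral_of_hasDerivAt hcoeff (fun t => (hd t).congr_deriv (by ring)) t]
    have := hds.trans h0
    positivity
  have hanti : StrictAnti d := strictAnti_of_deriv_neg fun t => by
    rw [(hd t).deriv, neg_lt_zero]
    have := hpos t
    positivity
  refine ⟨fun t _ => hrate t, neg_lt_zero.2 hc, ?_, fun s _ t _ hst => ?_⟩
  · obtain ⟨t₁, ht₁, hdt₁⟩ := exists_eq_of_deriv_le_neg hdiff hc h0.le hrate
    exact ⟨t₁, ht₁.1, by simpa only [c, div_div_eq_mul_div] using ht₁.2, hdt₁⟩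
  · simpa only [abs_of_pos (hpos _)] using hanti hst
end

section
/- Let i be a positive odd integer, and let k > 0, V_g > 0, and χ^∞ ∈ (0, π/2]. If d : [0,∞) → ℝ is differentiable and satisfies d'(t) = −V_g·sin((2χ^∞/π)·arctan(k·d(t)^i)) for all t, then d(t)·d'(t) < 0 whenever d(t) ≠ 0; consequently the Lyapunov function W(t) = d(t)²/2 is strictly decreasing at every t with d(t) ≠ 0, and |d| is nonincreasing on [0,∞). -/
/-!
The cross-track error follows `d' = f(d)` for the field `f(x) = -V_g·sin(c·arctan(k·xⁱ))`,
`c = 2χ^∞/π ∈ (0, 1]`. Since `c·arctan` takes values in `(-π/2, π/2)`, where `sin` is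
increasing, `x ↦ sin(c·arctan(k·xⁱ))` is strictly increasing for odd `i` and vanishes at `0`;
hence `f` is restoring: `x·f(x) < 0` for `x ≠ 0`. Along any solution the Lyapunov function
`d²/2` then has derivative `d·f(d) ≤ 0`, so `d²`, and with it `|d|`, is nonincreasing.
-/

open Real Set

theorem StrictMono.mul_pos_of_map_zero {R : Type*} [Ring R] [LinearOrder R]
    [IsStrictOrderedRing R] {g : R → R} (hg : StrictMono g) (h0 : g 0 = 0) {x : R} (hx : x ≠ 0) : 0 < x * g x := by
  rcases hx.lt_or_gt with hneg | hpos
  · exact mul_pos_of_neg_of_neg hneg (h0 ▸ hg hneg)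
  · exact mul_pos hpos (h0 ▸ hg hpos)

theorem Real.strictMono_sin_mul_arctan {c : ℝ} (hc0 : 0 < c) (hc1 : c ≤ 1) :
    StrictMono fun x => sin (c * arctan x) := by
  have mem_Icc (x : ℝ) : c * arctan x ∈ Icc (-(π / 2)) (π / 2) := by
    rw [mem_Icc, ← abs_le, abs_mul, abs_of_pos hc0]
    calc c * |arctan x| ≤ |arctan x| := mul_le_of_le_one_left (abs_nonneg _) hc1
      _ ≤ π / 2 := (abs_lt.mpr ⟨neg_pi_div_two_lt_arctan x, arctan_lt_pi_div_two x⟩).le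
  exact fun a b hab =>
    strictMonoOn_sin (mem_Icc a) (mem_Icc b) (mul_lt_mul_of_pos_left (arctan_strictMono hab) hc0)

theorem HasDerivAt.sq_div_two {d : ℝ → ℝ} {d' t : ℝ} (hd : HasDerivAt d d' t) :
    HasDerivAt (fun s => d s ^ 2 / 2) (d t * d') t := by
  refine ((hd.pow 2).div_const 2).congr_deriv ?_
  ring

theorem antitone_abs_of_hasDerivAt_of_mul_nonpos {f d : ℝ → ℝ} (hf : ∀ x, x * f x ≤ 0)
    (hd : ∀ t, HasDerivAt d (f (d t)) t) : Antitone fun t => |d t| := by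
  have hsq : Antitone fun t => d t ^ 2 / 2 :=
    antitone_of_deriv_nonpos (fun t => (hd t).sq_div_two.differentiableAt)
      (fun t => (hd t).sq_div_two.deriv ▸ hf (d t))
  intro a b hab
  exact sq_le_sq.mp (by linarith [hsq hab])

theorem stmt7_general (i : ℕ) (hi : Odd i) (k Vg χinf : ℝ)
    (hk : 0 < k) (hVg : 0 < Vg) (hχinf : χinf ∈ Set.Ioc 0 (π / 2))
    (d : ℝ → ℝ)
    (hd : ∀ t, HasDerivAt d (-(Vg * Real.sin (2 * χinf / π * Real.arctan (k * d t ^ i)))) t) :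
    (∀ t, d t ≠ 0 → d t * deriv d t < 0) ∧
      (∀ t, d t ≠ 0 → deriv (fun s => d s ^ 2 / 2) t < 0) ∧
      AntitoneOn (fun t => |d t|) (Ici 0) := by
  obtain ⟨hχ0, hχ2⟩ := hχinf
  set g : ℝ → ℝ := fun x => sin (2 * χinf / π * arctan (k * x ^ i))
  have hc1 : 2 * χinf / π ≤ 1 := by rw [div_le_one pi_pos]; linarith
  have hg : StrictMono g :=
    (strictMono_sin_mul_arctan (by positivity) hc1).comp (hi.strictMono_pow.const_mul hk)
  have hrestoring (x : ℝ) (hx : x ≠ 0) : x * -(Vg * g x) < 0 := by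
    have hxg := hg.mul_pos_of_map_zero (by simp [g, hi.pos.ne']) hx
    linarith [mul_pos hVg hxg]
  have hrestoring_le (x : ℝ) : x * -(Vg * g x) ≤ 0 := by
    rcases eq_or_ne x 0 with rfl | hx
    · simp
    · exact (hrestoring x hx).le
  refine ⟨fun t ht => ?_, fun t ht => ?_, ?_⟩
  · rw [(hd t).deriv]; exact hrestoring _ ht
  · rw [(hd t).sq_div_two.deriv]; exact hrestoring _ ht
  · exact (antitone_abs_of_hasDerivAt_of_mul_nonpos hrestoring_le hd).antitoneOn _

/-- Sign property of the cross-track dynamics on the desired vector field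
(`Ẇ₃` Lyapunov argument): if `d' = -V_g·sin((2χ^∞/π)·arctan(k·d^i))` for a
positive odd `i`, `k > 0`, `V_g > 0`, `χ^∞ ∈ (0, π/2]`, then `d·d' < 0` whenever
`d ≠ 0`, the Lyapunov function `W = d²/2` is strictly decreasing at such
instants, and `|d|` is nonincreasing. -/
theorem stmt7 (i : ℕ) (hi : Odd i) (hi0 : 0 < i) (k Vg χinf : ℝ)
    (hk : 0 < k) (hVg : 0 < Vg) (hχinf : χinf ∈ Set.Ioc 0 (π / 2))
    (d : ℝ → ℝ)
    (hd : ∀ t, HasDerivAt d (-(Vg * Real.sin (2 * χinf / π * Real.arctan (k * d t ^ i)))) t) :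
    (∀ t, d t ≠ 0 → d t * deriv d t < 0) ∧
      (∀ t, d t ≠ 0 → deriv (fun s => d s ^ 2 / 2) t < 0) ∧
      AntitoneOn (fun t => |d t|) (Ici 0) :=
  stmt7_general i hi k Vg χinf hk hVg hχinf d hd
end

section
/- (Proposition 4, cross-track part.) Let V_g > 0 and k₁ > 0. Suppose d : [0,∞) → ℝ is differentiable with d'(t) = −V_g·k₁·d(t)/√(1 + (k₁·d(t))²) for all t (the cross-track dynamics when the course equals the desired course χ^d(d) = χ^p − arctan(k₁·d)). Then |d(t)| ≤ |d(0)|·exp(−V_g·k₁·t/√(1 + (k₁·d(0))²)) for all t ≥ 0; in particular d(t) → 0 as t → ∞. -/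
open Real Filter Set

/-!
Along the flow `d d' = -V_g k₁ d² / √(1 + (k₁ d)²) ≤ 0`, so `|d|` is nonincreasing and hence
`√(1 + (k₁ d)²) ≤ √(1 + (k₁ d(0))²)`. Therefore `d d' ≤ -c d²` with
`c = V_g k₁ / √(1 + (k₁ d(0))²)`, which makes `d² e^{2ct}` nonincreasing on `[0, ∞)`.
-/

theorem abs_le_abs_mul_exp_of_mul_deriv_le {d d' : ℝ → ℝ} {c : ℝ}
    (hd : ∀ t, HasDerivAt d (d' t) t) (hdecay : ∀ t, 0 ≤ t → d t * d' t ≤ -c * d t ^ 2)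
    {t : ℝ} (ht : 0 ≤ t) : |d t| ≤ |d 0| * exp (-(c * t)) := by
  have hderiv : ∀ s, HasDerivAt (fun s => d s ^ 2 * exp (2 * c * s))
      (2 * exp (2 * c * s) * (d s * d' s + c * d s ^ 2)) s := fun s =>
    (((hd s).fun_pow 2).mul ((hasDerivAt_id' s).const_mul (2 * c)).exp).congr_deriv (by ring)
  have hanti : AntitoneOn (fun s => d s ^ 2 * exp (2 * c * s)) (Ici 0) := by
    refine antitoneOn_of_deriv_nonpos (convex_Ici 0)
      (fun s _ => (hderiv s).continuousAt.continuousWithinAt)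
      (fun s _ => (hderiv s).differentiableAt.differentiableWithinAt) fun s hs => ?_
    rw [interior_Ici] at hs
    rw [(hderiv s).deriv]
    exact mul_nonpos_of_nonneg_of_nonpos (by positivity) (by linarith [hdecay s hs.le])
  have hsq : d t ^ 2 * exp (2 * c * t) ≤ d 0 ^ 2 := by
    simpa using hanti self_mem_Ici ht ht
  have hexp : exp (-(c * t)) ^ 2 * exp (2 * c * t) = 1 := by
    rw [← exp_nat_mul, ← exp_add]; ring_nf; exact exp_zero
  refine abs_le_of_sq_le_sq ?_ (by positivity)
  calc d t ^ 2 = d t ^ 2 * exp (2 * c * t) * exp (-(c * t)) ^ 2 := by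
        rw [mul_assoc, mul_comm (exp _), hexp, mul_one]
    _ ≤ d 0 ^ 2 * exp (-(c * t)) ^ 2 := by gcongr
    _ = (|d 0| * exp (-(c * t))) ^ 2 := by rw [mul_pow, sq_abs]

theorem tendsto_zero_of_abs_le_mul_exp {f : ℝ → ℝ} {C c : ℝ} (hc : 0 < c)
    (hf : ∀ t, 0 ≤ t → |f t| ≤ C * exp (-(c * t))) : Tendsto f atTop (nhds 0) := by
  have hexp : Tendsto (fun t => C * exp (-(c * t))) atTop (nhds 0) := by
    simpa using (tendsto_exp_atBot.comp
      (tendsto_neg_atTop_atBot.comp (tendsto_id.const_mul_atTop hc))).const_mul C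
  exact squeeze_zero_norm' ((eventually_ge_atTop 0).mono hf) hexp

theorem sqrt_one_add_mul_sq_le {k a b : ℝ} (h : |a| ≤ |b|) :
    √(1 + (k * a) ^ 2) ≤ √(1 + (k * b) ^ 2) := by
  have : (k * a) ^ 2 ≤ (k * b) ^ 2 := sq_le_sq.2 (by rw [abs_mul, abs_mul]; gcongr)
  gcongr

/-- Proposition 4, cross-track part: on the sliding surface of the linear branch,
`d' = -V_g·k₁·d/√(1 + (k₁ d)²)`, so the cross-track error decays exponentially
with rate `V_g·k₁/√(1 + (k₁ d(0))²)`, and in particular `d(t) → 0` as `t → ∞`. -/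
theorem stmt8 (Vg k₁ : ℝ) (hVg : 0 < Vg) (hk₁ : 0 < k₁)
    (d : ℝ → ℝ)
    (hd : ∀ t, HasDerivAt d (-(Vg * k₁ * d t / Real.sqrt (1 + (k₁ * d t) ^ 2))) t) :
    (∀ t, 0 ≤ t →
        |d t| ≤ |d 0| * Real.exp (-(Vg * k₁ * t / Real.sqrt (1 + (k₁ * d 0) ^ 2)))) ∧
      Filter.Tendsto d Filter.atTop (nhds 0) := by
  have hVk : 0 < Vg * k₁ := mul_pos hVg hk₁
  have hmul : ∀ t, d t * -(Vg * k₁ * d t / √(1 + (k₁ * d t) ^ 2))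
      = -(Vg * k₁ / √(1 + (k₁ * d t) ^ 2)) * d t ^ 2 := fun t => by ring
  have hbounded : ∀ t, 0 ≤ t → |d t| ≤ |d 0| := fun t ht => by
    simpa using abs_le_abs_mul_exp_of_mul_deriv_le (c := 0) hd
      (fun s _ => by rw [hmul, neg_zero, zero_mul, neg_mul]; exact neg_nonpos.2 (by positivity)) ht
  have hdecay : ∀ t, 0 ≤ t →
      |d t| ≤ |d 0| * exp (-(Vg * k₁ / √(1 + (k₁ * d 0) ^ 2) * t)) := fun t ht =>
    abs_le_abs_mul_exp_of_mul_deriv_le hd (fun s hs => by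
      rw [hmul]
      have := sqrt_one_add_mul_sq_le (k := k₁) (hbounded s hs)
      gcongr) ht
  refine ⟨fun t ht => ?_, tendsto_zero_of_abs_le_mul_exp (by positivity) hdecay⟩
  convert hdecay t ht using 4
  ring
end

section
/- (Proposition 4, course-error part; Case 3.) Suppose d, χ, χ^p : [0,∞) → ℝ with χ continuous, d and χ^p differentiable, d'(t) = V_g·sin(χ(t) − χ^p(t)), and χ'(t) = α·(χ^c(t) − χ(t)) wherever χ is differentiable. Define χ^d(t) = χ^p(t) − arctan(k₁·d(t)) and χ̃ = χ − χ^d, and let the command be χ^c = χ + χ^p'/α − (1/α)·(k₁/(1 + (k₁·d)²))·V_g·sin(χ − χ^p) − (β/α)·sign(χ̃) with β = σ/(1 + |χ̃|), σ > 0. Then at every t with χ̃(t) ≠ 0 one has χ̃'(t) = −σ·sign(χ̃(t))/(1 + |χ̃(t)|); consequently |χ̃| is monotonically nonincreasing and χ̃(t) = 0 for all t ≥ (|χ̃(0)| + χ̃(0)²/2)/σ. -/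
/-!
In closed loop the feed-forward terms of `χᶜ` cancel `χᵖ'` and the derivative of
`arctan (k₁ d)`, leaving `χ̃' = -σ sign χ̃ / (1 + |χ̃|)`. Since
`(|x| + x²/2)' = sign x (1 + |x|) x'`, the Lyapunov function `V = |χ̃| + χ̃²/2` then decreases at
the constant rate `σ` while `χ̃ ≠ 0`. A zero of `χ̃` is never left: on the stretch after the last
zero before a time `t` with `χ̃ t ≠ 0`, `V` would have to drop below `0`. So `V` decreases
linearly until `χ̃` vanishes, which happens by time `V(0)/σ`, and stays `0` afterwards.
-/

open Real Set

namespace CourseError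

section ConstantDecay

variable {W : ℝ → ℝ} {σ a : ℝ}

theorem eq_sub_mul_of_hasDerivAt_neg_const {s t : ℝ} (hst : s ≤ t)
    (hW : ContinuousOn W (Icc s t)) (hW' : ∀ u ∈ Ioo s t, HasDerivAt W (-σ) u) :
    W t = W s - σ * (t - s) := by
  rcases hst.eq_or_lt with rfl | hlt
  · ring
  obtain ⟨c, -, hc⟩ := exists_hasDerivAt_eq_slope W (fun _ => -σ) hlt hW hW'
  rw [eq_div_iff (sub_ne_zero.2 hlt.ne')] at hc
  linarith

theorem eq_zero_of_eq_zero_of_le (hσ : 0 < σ) (hW0 : ∀ t, a ≤ t → 0 ≤ W t)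
    (hWc : ContinuousOn W (Ici a)) (hW' : ∀ t, a ≤ t → W t ≠ 0 → HasDerivAt W (-σ) t)
    {t₀ t : ℝ} (ht₀ : a ≤ t₀) (h₀ : W t₀ = 0) (ht : t₀ ≤ t) : W t = 0 := by
  by_contra hne
  set Z := Icc t₀ t ∩ W ⁻¹' {0}
  have hZ : IsCompact Z :=
    isCompact_Icc.of_isClosed_subset
      ((hWc.mono fun u hu => ht₀.trans hu.1).preimage_isClosed_of_isClosed isClosed_Icc
        isClosed_singleton) inter_subset_left
  -- the last zero of `W` before `t`
  obtain ⟨⟨hτ₀, hτt⟩, hWτ⟩ : sSup Z ∈ Z := hZ.sSup_mem ⟨t₀, ⟨left_mem_Icc.2 ht, h₀⟩⟩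
  have hne_after : ∀ u ∈ Ioo (sSup Z) t, W u ≠ 0 := fun u hu hu0 =>
    hu.1.not_ge (le_csSup hZ.bddAbove ⟨⟨hτ₀.trans hu.1.le, hu.2.le⟩, hu0⟩)
  have hτt' : sSup Z < t := hτt.lt_of_ne fun h => hne (h ▸ hWτ)
  have hdecay := eq_sub_mul_of_hasDerivAt_neg_const hτt
    (hWc.mono fun u hu => ht₀.trans (hτ₀.trans hu.1))
    fun u hu => hW' u (ht₀.trans (hτ₀.trans hu.1.le)) (hne_after u hu)
  have : 0 ≤ W t := hW0 t (ht₀.trans ht)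
  rw [show W (sSup Z) = 0 from hWτ] at hdecay
  nlinarith

theorem eq_sub_mul_of_ne_zero (hσ : 0 < σ) (hW0 : ∀ t, a ≤ t → 0 ≤ W t)
    (hWc : ContinuousOn W (Ici a)) (hW' : ∀ t, a ≤ t → W t ≠ 0 → HasDerivAt W (-σ) t)
    {s t : ℝ} (hs : a ≤ s) (hst : s ≤ t) (ht : W t ≠ 0) : W t = W s - σ * (t - s) :=
  eq_sub_mul_of_hasDerivAt_neg_const hst (hWc.mono fun _ hu => hs.trans hu.1) fun u hu =>
    hW' u (hs.trans hu.1.le) fun h =>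
      ht (eq_zero_of_eq_zero_of_le hσ hW0 hWc hW' (hs.trans hu.1.le) h hu.2.le)

end ConstantDecay

section SlidingMode

variable {e : ℝ → ℝ} {σ a : ℝ}

theorem hasDerivAt_abs_add_sq_div_two {t : ℝ}
    (he : HasDerivAt e (-σ * Real.sign (e t) / (1 + |e t|)) t) (hne : e t ≠ 0) :
    HasDerivAt (fun u => |e u| + e u ^ 2 / 2) (-σ) t := by
  have hsq := (he.fun_pow 2).div_const 2
  rcases hne.lt_or_gt with h | h
  · have hW := ((hasDerivAt_abs_neg h).comp t he).add hsq
    rw [sign_of_neg h, abs_of_neg h] at hW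
    have : (0 : ℝ) < 1 + -e t := by linarith
    exact hW.congr_deriv (by field_simp; ring)
  · have hW := ((hasDerivAt_abs_pos h).comp t he).add hsq
    rw [sign_of_pos h, abs_of_pos h] at hW
    have : (0 : ℝ) < 1 + e t := by linarith
    exact hW.congr_deriv (by field_simp; ring)

theorem abs_add_sq_div_two_eq_sub_mul (hσ : 0 < σ) (hec : ContinuousOn e (Ici a))
    (he' : ∀ t, a ≤ t → e t ≠ 0 → HasDerivAt e (-σ * Real.sign (e t) / (1 + |e t|)) t)
    {s t : ℝ} (hs : a ≤ s) (hst : s ≤ t) (ht : e t ≠ 0) :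
    |e t| + e t ^ 2 / 2 = |e s| + e s ^ 2 / 2 - σ * (t - s) := by
  refine eq_sub_mul_of_ne_zero (W := fun u => |e u| + e u ^ 2 / 2) hσ (fun _ _ => by positivity)
    (hec.abs.add ((hec.pow 2).div_const 2)) (fun u hu hu0 => ?_) hs hst (by positivity)
  have hne : e u ≠ 0 := fun h => hu0 (by simp [h])
  exact hasDerivAt_abs_add_sq_div_two (he' u hu hne) hne

theorem antitoneOn_abs_of_sliding (hσ : 0 < σ) (hec : ContinuousOn e (Ici a))
    (he' : ∀ t, a ≤ t → e t ≠ 0 → HasDerivAt e (-σ * Real.sign (e t) / (1 + |e t|)) t) :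
    AntitoneOn (fun t => |e t|) (Ici a) := by
  intro s hs t _ hst
  by_cases ht : e t = 0
  · simp [ht]
  have h := abs_add_sq_div_two_eq_sub_mul hσ hec he' hs hst ht
  rw [← sq_abs (e t), ← sq_abs (e s)] at h
  nlinarith [abs_nonneg (e t), abs_nonneg (e s)]

theorem eq_zero_of_sliding (hσ : 0 < σ) (hec : ContinuousOn e (Ici a))
    (he' : ∀ t, a ≤ t → e t ≠ 0 → HasDerivAt e (-σ * Real.sign (e t) / (1 + |e t|)) t)
    {t : ℝ} (ht : (|e a| + e a ^ 2 / 2) / σ ≤ t - a) : e t = 0 := by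
  by_contra hne
  have hat : a ≤ t := by
    have : 0 ≤ (|e a| + e a ^ 2 / 2) / σ := by positivity
    linarith
  have h := abs_add_sq_div_two_eq_sub_mul hσ hec he' le_rfl hat hne
  rw [div_le_iff₀ hσ] at ht
  have : 0 < |e t| := abs_pos.2 hne
  nlinarith [sq_nonneg (e t)]

end SlidingMode

theorem hasDerivAt_courseError {Vg α k₁ σ t : ℝ} (hα : α ≠ 0) {d χ χp χp' χc χd : ℝ → ℝ}
    (hd : HasDerivAt d (Vg * Real.sin (χ t - χp t)) t) (hχp : HasDerivAt χp (χp' t) t)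
    (hχd : χd = fun t => χp t - Real.arctan (k₁ * d t))
    (hχ : HasDerivAt χ (α * (χc t - χ t)) t)
    (hχc : χc t = χ t + χp' t / α
        - (1 / α) * (k₁ / (1 + (k₁ * d t) ^ 2)) * Vg * Real.sin (χ t - χp t)
        - (σ / (1 + |χ t - χd t|) / α) * Real.sign (χ t - χd t)) :
    HasDerivAt (fun s => χ s - χd s)
      (-σ * Real.sign (χ t - χd t) / (1 + |χ t - χd t|)) t := by
  have hχd' : HasDerivAt χd
      (χp' t - k₁ * Vg * Real.sin (χ t - χp t) / (1 + (k₁ * d t) ^ 2)) t := by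
    rw [hχd]
    exact (hχp.fun_sub ((hasDerivAt_arctan _).comp t (hd.const_mul k₁))).congr_deriv (by ring)
  refine (hχ.sub hχd').congr_deriv ?_
  rw [hχc]
  have : (0 : ℝ) < 1 + |χ t - χd t| := by positivity
  field_simp
  ring

end CourseError

open CourseError in
theorem stmt9_general (Vg α k₁ σ : ℝ) (hα : 0 < α) (hσ : 0 < σ)
    (d χ χp χp' χc χd : ℝ → ℝ)
    (hχcont : ContinuousOn χ (Ici 0))
    (hd : ∀ t, 0 ≤ t → HasDerivAt d (Vg * Real.sin (χ t - χp t)) t)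
    (hχp : ∀ t, 0 ≤ t → HasDerivAt χp (χp' t) t)
    (hχd : χd = fun t => χp t - Real.arctan (k₁ * d t))
    (hχ : ∀ t, 0 ≤ t → χ t - χd t ≠ 0 → HasDerivAt χ (α * (χc t - χ t)) t)
    (hχc : χc = fun t => χ t + χp' t / α
        - (1 / α) * (k₁ / (1 + (k₁ * d t) ^ 2)) * Vg * Real.sin (χ t - χp t)
        - (σ / (1 + |χ t - χd t|) / α) * Real.sign (χ t - χd t)) :
    (∀ t, 0 ≤ t → χ t - χd t ≠ 0 →
      HasDerivAt (fun s => χ s - χd s)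
        (-σ * Real.sign (χ t - χd t) / (1 + |χ t - χd t|)) t) ∧
      AntitoneOn (fun t => |χ t - χd t|) (Ici 0) ∧
      ∀ t, (|χ 0 - χd 0| + (χ 0 - χd 0) ^ 2 / 2) / σ ≤ t → χ t - χd t = 0 := by
  have he' : ∀ t, 0 ≤ t → χ t - χd t ≠ 0 → HasDerivAt (fun s => χ s - χd s)
      (-σ * Real.sign (χ t - χd t) / (1 + |χ t - χd t|)) t := fun t ht hne =>
    hasDerivAt_courseError hα.ne' (hd t ht) (hχp t ht) hχd (hχ t ht hne) (congrFun hχc t)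
  have hec : ContinuousOn (fun s => χ s - χd s) (Ici 0) := by
    refine hχcont.sub fun t ht => ?_
    rw [hχd]
    exact ((hχp t ht).continuousAt.sub (continuous_arctan.continuousAt.comp
      ((hd t ht).continuousAt.const_mul k₁))).continuousWithinAt
  exact ⟨he', antitoneOn_abs_of_sliding hσ hec he', fun t ht =>
    eq_zero_of_sliding (e := fun s => χ s - χd s) hσ hec he' (by simpa using ht)⟩

/-- Proposition 4, course-error part (Case 3 of the switched vector field): with
`χ^d = χ^p - arctan(k₁ d)`, `χ̃ = χ - χ^d` and the sliding-mode command `χ^c`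
(with `β = σ/(1 + |χ̃|)`), the course error obeys
`χ̃' = -σ·sign(χ̃)/(1 + |χ̃|)` off the sliding surface,
`|χ̃|` is nonincreasing, and `χ̃` vanishes after `(|χ̃(0)| + χ̃(0)²/2)/σ`. -/
theorem stmt9 (Vg α k₁ σ : ℝ) (hVg : 0 < Vg) (hα : 0 < α) (hk₁ : 0 < k₁) (hσ : 0 < σ)
    (d χ χp χp' χc χd : ℝ → ℝ)
    (hχcont : ContinuousOn χ (Ici 0))
    (hd : ∀ t, 0 ≤ t → HasDerivAt d (Vg * Real.sin (χ t - χp t)) t)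
    (hχp : ∀ t, 0 ≤ t → HasDerivAt χp (χp' t) t)
    (hχd : χd = fun t => χp t - Real.arctan (k₁ * d t))
    (hχ : ∀ t, 0 ≤ t → χ t - χd t ≠ 0 → HasDerivAt χ (α * (χc t - χ t)) t)
    (hχc : χc = fun t => χ t + χp' t / α
        - (1 / α) * (k₁ / (1 + (k₁ * d t) ^ 2)) * Vg * Real.sin (χ t - χp t)
        - (σ / (1 + |χ t - χd t|) / α) * Real.sign (χ t - χd t)) :
    (∀ t, 0 ≤ t → χ t - χd t ≠ 0 →
      HasDerivAt (fun s => χ s - χd s)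
        (-σ * Real.sign (χ t - χd t) / (1 + |χ t - χd t|)) t) ∧
      AntitoneOn (fun t => |χ t - χd t|) (Ici 0) ∧
      ∀ t, (|χ 0 - χd 0| + (χ 0 - χd 0) ^ 2 / 2) / σ ≤ t → χ t - χd t = 0 :=
  stmt9_general Vg α k₁ σ hα hσ d χ χp χp' χc χd hχcont hd hχp hχd hχ hχc
end

section
/- Let k₁ > 0 and V_g > 0. The function f : [0,∞) → ℝ, f(d) = k₁²·V_g·d/(1 + (k₁·d)²)^{3/2}, attains its maximum value (2/(3√3))·k₁·V_g, and this maximum is attained exactly at d = 1/(√2·k₁). -/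
open Real

/-!
Writing `x = k₁ d`, the function is `k₁ V_g · x / (1 + x²)^{3/2}`, so everything reduces to the
bound `3√3 x ≤ 2 (1 + x²)^{3/2}`. Squared, this is `27 x² ≤ 4 (1 + x²)³`, and the difference
factors as `(2x² - 1)² (x² + 4)`, which vanishes only at `x² = 1/2`.
-/

lemma rpow_three_halves_sq {a : ℝ} (ha : 0 ≤ a) : (a ^ ((3 : ℝ) / 2)) ^ 2 = a ^ 3 := by
  rw [← Real.rpow_natCast, ← Real.rpow_mul ha]
  norm_num

lemma sq_sub_sq_three_sqrt_three_mul (x : ℝ) :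
    (2 * (1 + x ^ 2) ^ ((3 : ℝ) / 2)) ^ 2 - (3 * √3 * x) ^ 2
      = (2 * x ^ 2 - 1) ^ 2 * (x ^ 2 + 4) := by
  rw [mul_pow, rpow_three_halves_sq (by positivity), mul_pow, mul_pow, sq_sqrt (by norm_num)]
  ring

lemma three_sqrt_three_mul_le (x : ℝ) : 3 * √3 * x ≤ 2 * (1 + x ^ 2) ^ ((3 : ℝ) / 2) := by
  have hsq : (3 * √3 * x) ^ 2 ≤ (2 * (1 + x ^ 2) ^ ((3 : ℝ) / 2)) ^ 2 := by
    nlinarith [sq_sub_sq_three_sqrt_three_mul x, sq_nonneg (2 * x ^ 2 - 1), sq_nonneg x]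
  exact le_of_sq_le_sq hsq (by positivity)

lemma eq_inv_sqrt_two_of_three_sqrt_three_mul_eq {x : ℝ}
    (h : 3 * √3 * x = 2 * (1 + x ^ 2) ^ ((3 : ℝ) / 2)) : x = (√2)⁻¹ := by
  have hpos : 0 < x := by
    have : 0 < 3 * √3 * x := h ▸ by positivity
    exact pos_of_mul_pos_right this (by positivity)
  have hx2 : x ^ 2 = 2⁻¹ := by
    have hfac := sq_sub_sq_three_sqrt_three_mul x
    rw [h, sub_self, eq_comm, mul_eq_zero, or_iff_left (by positivity), sq_eq_zero_iff] at hfac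
    linarith
  rw [← sqrt_inv, ← hx2, sqrt_sq hpos.le]

lemma div_one_add_sq_rpow_le (x : ℝ) : x / (1 + x ^ 2) ^ ((3 : ℝ) / 2) ≤ 2 / (3 * √3) := by
  rw [div_le_div_iff₀ (by positivity) (by positivity), mul_comm x]
  exact three_sqrt_three_mul_le x

lemma div_one_add_sq_rpow_eq_iff (x : ℝ) :
    x / (1 + x ^ 2) ^ ((3 : ℝ) / 2) = 2 / (3 * √3) ↔ x = (√2)⁻¹ := by
  rw [div_eq_div_iff (by positivity) (by positivity), mul_comm x]
  refine ⟨eq_inv_sqrt_two_of_three_sqrt_three_mul_eq, ?_⟩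
  rintro rfl
  rw [inv_pow, sq_sqrt zero_le_two]
  have hsq := sq_sub_sq_three_sqrt_three_mul (√2)⁻¹
  rw [inv_pow, sq_sqrt zero_le_two, mul_inv_cancel₀ two_ne_zero, sub_self, zero_pow two_ne_zero,
    zero_mul, sub_eq_zero] at hsq
  exact (pow_left_inj₀ (by positivity) (by positivity) two_ne_zero).1 hsq.symm

/-- Curvature analysis for the linear branch (i = 1): the turn-rate deviation
`f(d) = k₁²·V_g·d/(1 + (k₁ d)²)^{3/2}` on `[0,∞)` attains its maximum
`(2/(3√3))·k₁·V_g` exactly at `d = 1/(√2·k₁)`. -/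
theorem stmt12 (k₁ Vg : ℝ) (hk₁ : 0 < k₁) (hVg : 0 < Vg)
    (f : ℝ → ℝ)
    (hf : f = fun d => k₁ ^ 2 * Vg * d / (1 + (k₁ * d) ^ 2) ^ ((3 : ℝ) / 2)) :
    (∀ d, 0 ≤ d → f d ≤ 2 / (3 * Real.sqrt 3) * k₁ * Vg) ∧
      f (1 / (Real.sqrt 2 * k₁)) = 2 / (3 * Real.sqrt 3) * k₁ * Vg ∧
      ∀ d, 0 ≤ d → f d = 2 / (3 * Real.sqrt 3) * k₁ * Vg → d = 1 / (Real.sqrt 2 * k₁) := by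
  have hkV : 0 < k₁ * Vg := mul_pos hk₁ hVg
  have hf' : ∀ d, f d = k₁ * Vg * ((k₁ * d) / (1 + (k₁ * d) ^ 2) ^ ((3 : ℝ) / 2)) := by
    intro d; rw [hf]; ring
  have hmax : 2 / (3 * √3) * k₁ * Vg = k₁ * Vg * (2 / (3 * √3)) := by ring
  have hd₀ : k₁ * (1 / (√2 * k₁)) = (√2)⁻¹ := by field_simp
  refine ⟨fun d _ => ?_, ?_, fun d _ hd => ?_⟩
  · rw [hf', hmax]
    exact mul_le_mul_of_nonneg_left (div_one_add_sq_rpow_le _) hkV.le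
  · rw [hf', hmax, hd₀, (div_one_add_sq_rpow_eq_iff _).2 rfl]
  · rw [hf', hmax, mul_right_inj' hkV.ne', div_one_add_sq_rpow_eq_iff] at hd
    rw [← hd₀] at hd
    exact mul_left_cancel₀ hk₁.ne' hd
end

section
/- Let k₃ > 0 and V_g > 0. The function g : [0,∞) → ℝ, g(d) = 3·k₃²·V_g·d⁵/(1 + (k₃·d³)²)^{3/2}, attains its maximum value (2^{4/3}·5^{5/6}/9)·V_g·k₃^{1/3}, and this maximum is attained exactly at d = 5^{1/6}/(2^{1/3}·k₃^{1/3}). -/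
/-!
Substituting `t = k₃^{1/3} d` gives `g d = 3 V_g k₃^{1/3} · t⁵ / (1 + t⁶)^{3/2}`, so everything reduces
to the parameter-free profile `t ↦ t⁵ / (1 + t⁶)^{3/2}`. Its sixth power is `s⁵ / (1 + s)⁹` with
`s = t⁶`, and `4⁴ 5⁵ (1 + s)⁹ - 9⁹ s⁵ = (4 s - 5)² q(s)` with `q` having positive coefficients,
so on `s ≥ 0` this is maximal exactly at `s = 5/4`.
-/

open Real

lemma exists_pos_sub_eq_sq_mul {s : ℝ} (hs : 0 ≤ s) :
    ∃ q > 0, 4 ^ 4 * 5 ^ 5 * (1 + s) ^ 9 - 9 ^ 9 * s ^ 5 = (4 * s - 5) ^ 2 * q :=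
  ⟨50000 * s ^ 7 + 575000 * s ^ 6 + 3159375 * s ^ 5 + 11200000 * s ^ 4 + 5149696 * s ^ 3 +
    1674240 * s ^ 2 + 339200 * s + 32000, by positivity, by ring⟩

lemma pow_five_div_one_add_pow_nine_le {s : ℝ} (hs : 0 ≤ s) :
    s ^ 5 / (1 + s) ^ 9 ≤ (5 / 4) ^ 5 / (1 + 5 / 4) ^ 9 := by
  obtain ⟨q, hq, hgap⟩ := exists_pos_sub_eq_sq_mul hs
  rw [div_le_div_iff₀ (by positivity) (by norm_num)]
  have : 0 ≤ (4 * s - 5) ^ 2 * q := by positivity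
  linarith

lemma eq_of_pow_five_div_one_add_pow_nine_eq {s : ℝ} (hs : 0 ≤ s)
    (h : s ^ 5 / (1 + s) ^ 9 = (5 / 4) ^ 5 / (1 + 5 / 4) ^ 9) : s = 5 / 4 := by
  obtain ⟨q, hq, hgap⟩ := exists_pos_sub_eq_sq_mul hs
  rw [div_eq_div_iff (by positivity) (by norm_num)] at h
  have hsq : (4 * s - 5) ^ 2 * q = 0 := by linear_combination -hgap - 4 ^ 9 * h
  have : 4 * s - 5 = 0 := by simpa [hq.ne'] using hsq
  linarith

noncomputable def cubicProfile (t : ℝ) : ℝ := t ^ 5 / (1 + t ^ 6) ^ ((3 : ℝ) / 2)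

noncomputable def cubicProfilePeak : ℝ := (5 : ℝ) ^ ((1 : ℝ) / 6) / (2 : ℝ) ^ ((1 : ℝ) / 3)

lemma cubicProfile_nonneg {t : ℝ} (ht : 0 ≤ t) : 0 ≤ cubicProfile t := by
  unfold cubicProfile
  positivity

lemma cubicProfile_pow_six (t : ℝ) : cubicProfile t ^ 6 = (t ^ 6) ^ 5 / (1 + t ^ 6) ^ 9 := by
  rw [cubicProfile, div_pow, ← rpow_mul_natCast (by positivity)]
  norm_num
  ring

lemma cubicProfilePeak_nonneg : 0 ≤ cubicProfilePeak := by
  unfold cubicProfilePeak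
  positivity

lemma cubicProfilePeak_pow_six : cubicProfilePeak ^ 6 = 5 / 4 := by
  rw [cubicProfilePeak, div_pow, ← rpow_mul_natCast (by norm_num),
    ← rpow_mul_natCast (by norm_num)]
  norm_num

lemma cubicProfile_cubicProfilePeak :
    cubicProfile cubicProfilePeak = (2 : ℝ) ^ ((4 : ℝ) / 3) * (5 : ℝ) ^ ((5 : ℝ) / 6) / 27 := by
  have h94 : (1 + cubicProfilePeak ^ 6) ^ ((3 : ℝ) / 2) = 27 / 8 := by
    rw [cubicProfilePeak_pow_six, show (1 : ℝ) + 5 / 4 = (3 / 2) ^ 2 by norm_num,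
      ← rpow_natCast, ← rpow_mul (by norm_num)]
    norm_num
  have h8 : (2 : ℝ) ^ ((4 : ℝ) / 3) * (2 : ℝ) ^ ((5 : ℝ) / 3) = 8 := by
    rw [← rpow_add (by norm_num)]
    norm_num
  rw [cubicProfile, h94, cubicProfilePeak, div_pow, ← rpow_mul_natCast (by norm_num),
    ← rpow_mul_natCast (by norm_num)]
  field_simp
  norm_num
  linear_combination -(5 : ℝ) ^ ((5 : ℝ) / 6) * h8

lemma cubicProfile_le (t : ℝ) : cubicProfile t ≤ cubicProfile cubicProfilePeak := by
  refine le_of_pow_le_pow_left₀ (n := 6) (by norm_num)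
    (cubicProfile_nonneg cubicProfilePeak_nonneg) ?_
  rw [cubicProfile_pow_six, cubicProfile_pow_six, cubicProfilePeak_pow_six]
  exact pow_five_div_one_add_pow_nine_le (by positivity)

lemma eq_cubicProfilePeak_of_cubicProfile_eq {t : ℝ} (ht : 0 ≤ t)
    (h : cubicProfile t = cubicProfile cubicProfilePeak) : t = cubicProfilePeak := by
  have h6 := congrArg (· ^ 6) h
  simp only [cubicProfile_pow_six, cubicProfilePeak_pow_six] at h6
  rw [← pow_left_inj₀ ht cubicProfilePeak_nonneg (by norm_num : 6 ≠ 0), cubicProfilePeak_pow_six]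
  exact eq_of_pow_five_div_one_add_pow_nine_eq (by positivity) h6

lemma cubic_turn_rate_eq_cubicProfile (c V d : ℝ) :
    3 * (c ^ 3) ^ 2 * V * d ^ 5 / (1 + (c ^ 3 * d ^ 3) ^ 2) ^ ((3 : ℝ) / 2)
      = 3 * V * c * cubicProfile (c * d) := by
  rw [cubicProfile, show (c ^ 3 * d ^ 3) ^ 2 = (c * d) ^ 6 by ring]
  ring

/-- Curvature analysis for the cubic branch (i = 3): the turn-rate deviation
`g(d) = 3·k₃²·V_g·d⁵/(1 + (k₃ d³)²)^{3/2}` on `[0,∞)` attains its maximum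
`(2^{4/3}·5^{5/6}/9)·V_g·k₃^{1/3}` exactly at `d = 5^{1/6}/(2^{1/3}·k₃^{1/3})`. -/
theorem stmt13 (k₃ Vg : ℝ) (hk₃ : 0 < k₃) (hVg : 0 < Vg)
    (g : ℝ → ℝ)
    (hg : g = fun d => 3 * k₃ ^ 2 * Vg * d ^ 5 / (1 + (k₃ * d ^ 3) ^ 2) ^ ((3 : ℝ) / 2)) :
    (∀ d, 0 ≤ d →
        g d ≤ (2 : ℝ) ^ ((4 : ℝ) / 3) * (5 : ℝ) ^ ((5 : ℝ) / 6) / 9 * Vg * k₃ ^ ((1 : ℝ) / 3)) ∧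
      g ((5 : ℝ) ^ ((1 : ℝ) / 6) / ((2 : ℝ) ^ ((1 : ℝ) / 3) * k₃ ^ ((1 : ℝ) / 3)))
        = (2 : ℝ) ^ ((4 : ℝ) / 3) * (5 : ℝ) ^ ((5 : ℝ) / 6) / 9 * Vg * k₃ ^ ((1 : ℝ) / 3) ∧
      ∀ d, 0 ≤ d →
        g d = (2 : ℝ) ^ ((4 : ℝ) / 3) * (5 : ℝ) ^ ((5 : ℝ) / 6) / 9 * Vg * k₃ ^ ((1 : ℝ) / 3) →
        d = (5 : ℝ) ^ ((1 : ℝ) / 6) / ((2 : ℝ) ^ ((1 : ℝ) / 3) * k₃ ^ ((1 : ℝ) / 3)) := by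
  set c := k₃ ^ ((1 : ℝ) / 3) with hc
  have hc_pos : 0 < c := by positivity
  have hc3 : c ^ 3 = k₃ := by
    rw [hc, ← rpow_mul_natCast hk₃.le]
    norm_num
  have hg_profile : ∀ d, g d = 3 * Vg * c * cubicProfile (c * d) := by
    intro d
    rw [hg, ← hc3]
    exact cubic_turn_rate_eq_cubicProfile c Vg d
  have hmax : (2 : ℝ) ^ ((4 : ℝ) / 3) * (5 : ℝ) ^ ((5 : ℝ) / 6) / 9 * Vg * c
      = 3 * Vg * c * cubicProfile cubicProfilePeak := by
    rw [cubicProfile_cubicProfilePeak]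
    ring
  have hpeak : (5 : ℝ) ^ ((1 : ℝ) / 6) / ((2 : ℝ) ^ ((1 : ℝ) / 3) * c) = cubicProfilePeak / c := by
    rw [cubicProfilePeak, div_div]
  simp only [hmax, hpeak, hg_profile]
  refine ⟨fun d _ => ?_, ?_, fun d hd h => ?_⟩
  · exact mul_le_mul_of_nonneg_left (cubicProfile_le _) (by positivity)
  · rw [mul_div_cancel₀ _ hc_pos.ne']
  · have hcd := eq_cubicProfilePeak_of_cubicProfile_eq (by positivity)
      (mul_left_cancel₀ (by positivity) h)
    rw [← hcd]
    field_simp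
end

section
/- (Curvature feasibility condition.) Let V_g, k₁, k₃, κ_max > 0 and c ≥ 0 satisfy max{2k₁/(3√3), (2^{4/3}·5^{5/6}/9)·k₃^{1/3}} ≤ κ_max − c/V_g. Let χ^p : [0,∞) → ℝ be differentiable with |χ^p'(t)| ≤ c for all t, let i ∈ {1, 3} with corresponding gain k_i, and let d : [0,∞) → ℝ be differentiable with d'(t) = −V_g·k_i·d(t)^i/√(1 + (k_i·d(t)^i)²). Then the desired course χ^d(t) = χ^p(t) − arctan(k_i·d(t)^i) satisfies |dχ^d/dt(t)| ≤ V_g·κ_max for all t ≥ 0; i.e., the curvature of the commanded path never exceeds κ_max. -/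
/-!
On the sliding surface the chain rule gives `d/dt arctan (k dⁱ) = -V_g i k² d²ⁱ⁻¹ / (1 + (k dⁱ)²)^{3/2}`.
After substituting `u = k |d|` (for `i = 1`) or `u = k^{1/3} |d|` (for `i = 3`) its modulus is
`V_g k · u / (1 + u²)^{3/2}`, resp. `V_g k^{1/3} · 3u⁵ / (1 + u⁶)^{3/2}`, and the two one-variable
profiles are bounded by their maxima `2/(3√3)` and `2^{4/3} 5^{5/6} / 9`. The triangle
inequality with `|χ^p'| ≤ c` then gives `|χ^d'| ≤ c + V_g (κ_max - c/V_g) = V_g κ_max`.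
-/

open Real

theorem div_one_add_sq_mul_sqrt_le (u : ℝ) :
    u / ((1 + u ^ 2) * √(1 + u ^ 2)) ≤ 2 / (3 * √3) := by
  have hS : 0 < 1 + u ^ 2 := by positivity
  rw [div_le_div_iff₀ (by positivity) (by positivity)]
  refine abs_le_of_sq_le_sq' ?_ (by positivity) |>.2
  have key : 27 * u ^ 2 ≤ 4 * (1 + u ^ 2) ^ 3 := by
    nlinarith [sq_nonneg (2 * u ^ 2 - 1), sq_nonneg u]
  calc (u * (3 * √3)) ^ 2 = 9 * u ^ 2 * √3 ^ 2 := by ring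
    _ = 27 * u ^ 2 := by rw [sq_sqrt (by norm_num)]; ring
    _ ≤ 4 * (1 + u ^ 2) ^ 3 := key
    _ = (2 * ((1 + u ^ 2) * √(1 + u ^ 2))) ^ 2 := by
      rw [mul_pow, mul_pow, sq_sqrt hS.le]; ring

theorem three_mul_pow_five_div_one_add_pow_six_mul_sqrt_le {u : ℝ} (hu : 0 ≤ u) :
    3 * u ^ 5 / ((1 + u ^ 6) * √(1 + u ^ 6)) ≤ 2 ^ (4 / 3 : ℝ) * 5 ^ (5 / 6 : ℝ) / 9 := by
  have hS : 0 < 1 + u ^ 6 := by positivity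
  rw [div_le_div_iff₀ (by positivity) (by norm_num)]
  refine (pow_le_pow_iff_left₀ (by positivity) (by positivity) (n := 6) (by norm_num)).1 ?_
  have h2 : ((2 : ℝ) ^ (4 / 3 : ℝ)) ^ 6 = 256 := by
    rw [← rpow_natCast, ← rpow_mul (by norm_num)]; norm_num
  have h5 : ((5 : ℝ) ^ (5 / 6 : ℝ)) ^ 6 = 3125 := by
    rw [← rpow_natCast, ← rpow_mul (by norm_num)]; norm_num
  have hsqrt : √(1 + u ^ 6) ^ 6 = (1 + u ^ 6) ^ 3 := by
    rw [show 6 = 2 * 3 by rfl, pow_mul, sq_sqrt hS.le]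
  -- `4 u⁶ = 5` is the maximiser; the cofactor of `(4 u⁶ - 5)²` has positive coefficients.
  have key : 387420489 * (u ^ 6) ^ 5 ≤ 800000 * (1 + u ^ 6) ^ 9 := by
    have hr : 0 ≤ 32000 + 339200 * u ^ 6 + 1674240 * (u ^ 6) ^ 2 + 5149696 * (u ^ 6) ^ 3
        + 11200000 * (u ^ 6) ^ 4 + 3159375 * (u ^ 6) ^ 5 + 575000 * (u ^ 6) ^ 6
        + 50000 * (u ^ 6) ^ 7 := by positivity
    nlinarith [mul_nonneg (sq_nonneg (4 * u ^ 6 - 5)) hr]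
  calc (3 * u ^ 5 * 9) ^ 6 = 387420489 * (u ^ 6) ^ 5 := by ring
    _ ≤ 800000 * (1 + u ^ 6) ^ 9 := key
    _ = (2 ^ (4 / 3 : ℝ) * 5 ^ (5 / 6 : ℝ) * ((1 + u ^ 6) * √(1 + u ^ 6))) ^ 6 := by
      rw [mul_pow, mul_pow, mul_pow, h2, h5, hsqrt]; ring

/-- `d/dt arctan (k dⁿ)` along `d' = -V_g k dⁿ / √(1 + (k dⁿ)²)`, as a function of `x = d t`. -/
noncomputable def slidingCourseRate (Vg k : ℝ) (n : ℕ) (x : ℝ) : ℝ :=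
  k * n * x ^ (n - 1) * -(Vg * k * x ^ n / √(1 + (k * x ^ n) ^ 2)) / (1 + (k * x ^ n) ^ 2)

theorem hasDerivAt_arctan_mul_pow {f : ℝ → ℝ} {f' t : ℝ} (k : ℝ) (n : ℕ)
    (hf : HasDerivAt f f' t) :
    HasDerivAt (fun s => arctan (k * f s ^ n))
      (k * n * f t ^ (n - 1) * f' / (1 + (k * f t ^ n) ^ 2)) t := by
  convert ((hf.fun_pow n).const_mul k).arctan using 1
  ring

theorem abs_slidingCourseRate {Vg k : ℝ} (hVg : 0 ≤ Vg) (hk : 0 ≤ k) (n : ℕ) (x : ℝ) :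
    |slidingCourseRate Vg k n x| = Vg * (n * k ^ 2 * |x| ^ (n - 1) * |x| ^ n
      / ((1 + (k * x ^ n) ^ 2) * √(1 + (k * x ^ n) ^ 2))) := by
  have hS : 0 < 1 + (k * x ^ n) ^ 2 := by positivity
  simp only [slidingCourseRate, abs_div, abs_mul, abs_neg, abs_pow, Nat.abs_cast,
    abs_of_nonneg hVg, abs_of_nonneg hk, abs_of_pos hS, abs_of_pos (sqrt_pos.2 hS)]
  field_simp

theorem abs_slidingCourseRate_one_le {Vg k : ℝ} (hVg : 0 ≤ Vg) (hk : 0 ≤ k) (x : ℝ) :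
    |slidingCourseRate Vg k 1 x| ≤ Vg * (2 * k / (3 * √3)) := by
  set u := k * |x|
  have hu : (k * x ^ 1) ^ 2 = u ^ 2 := by rw [pow_one, mul_pow, mul_pow, sq_abs]
  rw [abs_slidingCourseRate hVg hk, hu]
  calc Vg * ((1 : ℕ) * k ^ 2 * |x| ^ (1 - 1) * |x| ^ 1 / ((1 + u ^ 2) * √(1 + u ^ 2)))
      = Vg * k * (u / ((1 + u ^ 2) * √(1 + u ^ 2))) := by ring
    _ ≤ Vg * k * (2 / (3 * √3)) := 
      mul_le_mul_of_nonneg_left (div_one_add_sq_mul_sqrt_le u) (by positivity)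
    _ = Vg * (2 * k / (3 * √3)) := by ring

theorem abs_slidingCourseRate_three_le {Vg k : ℝ} (hVg : 0 ≤ Vg) (hk : 0 ≤ k) (x : ℝ) :
    |slidingCourseRate Vg k 3 x|
      ≤ Vg * (2 ^ (4 / 3 : ℝ) * 5 ^ (5 / 6 : ℝ) / 9 * k ^ (1 / 3 : ℝ)) := by
  set K := k ^ (1 / 3 : ℝ)
  have hK : K ^ 3 = k := by
    rw [← rpow_natCast, ← rpow_mul hk]; norm_num
  set u := K * |x|
  have hu : (k * x ^ 3) ^ 2 = u ^ 6 := by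
    rw [← hK, show u ^ 6 = K ^ 6 * (|x| ^ 2) ^ 3 by ring, sq_abs]; ring
  rw [abs_slidingCourseRate hVg hk, hu]
  calc Vg * ((3 : ℕ) * k ^ 2 * |x| ^ (3 - 1) * |x| ^ 3 / ((1 + u ^ 6) * √(1 + u ^ 6)))
      = Vg * K * (3 * u ^ 5 / ((1 + u ^ 6) * √(1 + u ^ 6))) := by rw [← hK]; push_cast; ring
    _ ≤ Vg * K * (2 ^ (4 / 3 : ℝ) * 5 ^ (5 / 6 : ℝ) / 9) := 
      mul_le_mul_of_nonneg_left
        (three_mul_pow_five_div_one_add_pow_six_mul_sqrt_le (by positivity)) (by positivity)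
    _ = Vg * (2 ^ (4 / 3 : ℝ) * 5 ^ (5 / 6 : ℝ) / 9 * K) := by ring

theorem stmt14_general (Vg k₁ k₃ κmax c : ℝ) (hVg : 0 < Vg) (hk₁ : 0 < k₁) (hk₃ : 0 < k₃)
    (hfeas : max (2 * k₁ / (3 * Real.sqrt 3))
        ((2 : ℝ) ^ ((4 : ℝ) / 3) * (5 : ℝ) ^ ((5 : ℝ) / 6) / 9 * k₃ ^ ((1 : ℝ) / 3))
      ≤ κmax - c / Vg)
    (χp χp' d : ℝ → ℝ)
    (hχp : ∀ t, HasDerivAt χp (χp' t) t)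
    (hχpb : ∀ t, 0 ≤ t → |χp' t| ≤ c)
    (i : ℕ) (ki : ℝ) (hik : (i = 1 ∧ ki = k₁) ∨ (i = 3 ∧ ki = k₃))
    (hd : ∀ t, HasDerivAt d (-(Vg * ki * d t ^ i / Real.sqrt (1 + (ki * d t ^ i) ^ 2))) t) :
    ∀ t, 0 ≤ t →
      |deriv (fun s => χp s - Real.arctan (ki * d s ^ i)) t| ≤ Vg * κmax := by
  intro t ht
  have hcourse : HasDerivAt (fun s => χp s - arctan (ki * d s ^ i))
      (χp' t - slidingCourseRate Vg ki i (d t)) t :=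
    (hχp t).sub (hasDerivAt_arctan_mul_pow ki i (hd t))
  have hrate : |slidingCourseRate Vg ki i (d t)| ≤ Vg * (κmax - c / Vg) := by
    rcases hik with ⟨rfl, rfl⟩ | ⟨rfl, rfl⟩
    · exact (abs_slidingCourseRate_one_le hVg.le hk₁.le _).trans
        (mul_le_mul_of_nonneg_left ((le_max_left _ _).trans hfeas) hVg.le)
    · exact (abs_slidingCourseRate_three_le hVg.le hk₃.le _).trans
        (mul_le_mul_of_nonneg_left ((le_max_right _ _).trans hfeas) hVg.le)
  calc |deriv (fun s => χp s - arctan (ki * d s ^ i)) t|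
      ≤ |χp' t| + |slidingCourseRate Vg ki i (d t)| := by rw [hcourse.deriv]; exact abs_sub _ _
    _ ≤ c + Vg * (κmax - c / Vg) := add_le_add (hχpb t ht) hrate
    _ = Vg * κmax := by field_simp; ring

/-- Curvature feasibility condition: if the gains `k₁, k₃` satisfy
`max{2k₁/(3√3), (2^{4/3}·5^{5/6}/9)·k₃^{1/3}} ≤ κ_max - c/V_g` with `|χ^p'| ≤ c`,
then along the sliding surface of either branch (`i = 1` with gain `k₁`, or
`i = 3` with gain `k₃`), the desired course `χ^d = χ^p - arctan(k_i d^i)` has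
turn rate bounded by `V_g·κ_max`, i.e. the commanded path curvature never
exceeds `κ_max`. -/
theorem stmt14 (Vg k₁ k₃ κmax c : ℝ) (hVg : 0 < Vg) (hk₁ : 0 < k₁) (hk₃ : 0 < k₃)
    (hκ : 0 < κmax) (hc : 0 ≤ c)
    (hfeas : max (2 * k₁ / (3 * Real.sqrt 3))
        ((2 : ℝ) ^ ((4 : ℝ) / 3) * (5 : ℝ) ^ ((5 : ℝ) / 6) / 9 * k₃ ^ ((1 : ℝ) / 3))
      ≤ κmax - c / Vg)
    (χp χp' d : ℝ → ℝ)
    (hχp : ∀ t, HasDerivAt χp (χp' t) t)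
    (hχpb : ∀ t, 0 ≤ t → |χp' t| ≤ c)
    (i : ℕ) (ki : ℝ) (hik : (i = 1 ∧ ki = k₁) ∨ (i = 3 ∧ ki = k₃))
    (hd : ∀ t, HasDerivAt d (-(Vg * ki * d t ^ i / Real.sqrt (1 + (ki * d t ^ i) ^ 2))) t) :
    ∀ t, 0 ≤ t →
      |deriv (fun s => χp s - Real.arctan (ki * d s ^ i)) t| ≤ Vg * κmax :=
  stmt14_general Vg k₁ k₃ κmax c hVg hk₁ hk₃ hfeas χp χp' d hχp hχpb i ki hik hd
end
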